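/- arXiv:1004.2104 — 11 statements merged into one kernel-verified Lean document; each statement's English description precedes it below -/
import Mathlib

section
/- Let K ≥ 1 and let a_1, …, a_K and b_1, …, b_K be arbitrary real numbers, with the convention a_0 = 0. For 1 ≤ i ≤ K set S_i = Σ_{j=i}^K b_j² (and S_{K+1} = 0). Then Σ_{i=1}^K (1/2)·log(1 + a_i²·b_i² / (a_i²·S_{i+1} + 1)) = (1/2)·Σ_{i=1}^K log(1 + (a_i² − a_{i-1}²)·S_i / (a_{i-1}²·S_i + 1)). (All arguments of the logarithms are ≥ 1, since each factor has the form (a²·s + 1)/(a'²·s + 1) with s a sum of squares.) -/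
open Finset

/-!
Every summand on either side is a difference of logarithms of numbers of the form `a² s + 1`
with `s` a tail sum of squares: on the left `log (a_i² S_i + 1) - log (a_i² S_{i+1} + 1)`, on the
right `log (a_i² S_i + 1) - log (a_{i-1}² S_i + 1)`. The two sides therefore differ by the
telescoping sum of `log (a_{i-1}² S_i + 1)`, whose end terms vanish because `a_0 = 0` and
`S_{K+1} = 0`.
-/

namespace Real

lemma log_one_add_div {d n : ℝ} (hd : 0 < d) (hdn : 0 < d + n) :
    log (1 + n / d) = log (d + n) - log d := by
  rw [one_add_div hd.ne', log_div hdn.ne' hd.ne']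

lemma log_one_add_sq_mul_div {c s t : ℝ} (hs : 0 ≤ s) (ht : 0 ≤ t) :
    log (1 + c ^ 2 * t / (c ^ 2 * s + 1)) = log (c ^ 2 * (t + s) + 1) - log (c ^ 2 * s + 1) := by
  rw [log_one_add_div (by positivity) (by positivity)]
  ring_nf

lemma log_one_add_sq_sub_sq_mul_div {c c' s : ℝ} (hs : 0 ≤ s) :
    log (1 + (c ^ 2 - c' ^ 2) * s / (c' ^ 2 * s + 1)) =
      log (c ^ 2 * s + 1) - log (c' ^ 2 * s + 1) := by
  rw [log_one_add_div (by positivity) (by ring_nf; positivity)]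
  ring_nf

end Real

lemma sic_sum_rate_telescoping_of_tail (K : ℕ) (a b S : ℕ → ℝ) (ha0 : a 0 = 0)
    (hS_nonneg : ∀ i, 0 ≤ S i) (hS_succ : ∀ i ∈ Icc 1 K, S i = b i ^ 2 + S (i + 1))
    (hS_last : S (K + 1) = 0) :
    ∑ i ∈ Icc 1 K, (1 / 2 : ℝ) * Real.log (1 + a i ^ 2 * b i ^ 2 / (a i ^ 2 * S (i + 1) + 1)) =
      (1 / 2 : ℝ) * ∑ i ∈ Icc 1 K,
        Real.log (1 + (a i ^ 2 - a (i - 1) ^ 2) * S i / (a (i - 1) ^ 2 * S i + 1)) := by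
  set g : ℕ → ℝ := fun i => Real.log (a (i - 1) ^ 2 * S i + 1) with hg
  have h_telescope : ∑ i ∈ Icc 1 K, (g (i + 1) - g i) = 0 := by
    rw [← Ico_add_one_right_eq_Icc, sum_Ico_sub g (by omega)]
    simp [hg, hS_last, ha0]
  have h_left (i : ℕ) (hi : i ∈ Icc 1 K) :
      Real.log (1 + a i ^ 2 * b i ^ 2 / (a i ^ 2 * S (i + 1) + 1)) =
        Real.log (a i ^ 2 * S i + 1) - g (i + 1) := by
    rw [Real.log_one_add_sq_mul_div (hS_nonneg _) (sq_nonneg _), hS_succ i hi]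
    simp only [hg, Nat.add_sub_cancel]
  have h_right (i : ℕ) :
      Real.log (1 + (a i ^ 2 - a (i - 1) ^ 2) * S i / (a (i - 1) ^ 2 * S i + 1)) =
        Real.log (a i ^ 2 * S i + 1) - g i :=
    Real.log_one_add_sq_sub_sq_mul_div (hS_nonneg _)
  rw [← mul_sum, sum_congr rfl h_left, sum_congr rfl fun i _ => h_right i]
  congr 1
  rw [sum_sub_distrib] at h_telescope
  simp only [sum_sub_distrib]
  linarith

theorem sic_sum_rate_telescoping_general (K : ℕ) (a b : ℕ → ℝ) (ha0 : a 0 = 0) :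
    ∑ i ∈ Finset.Icc 1 K, (1 / 2 : ℝ) *
        Real.log (1 + a i ^ 2 * b i ^ 2 /
          (a i ^ 2 * (∑ j ∈ Finset.Icc (i + 1) K, b j ^ 2) + 1)) =
      (1 / 2 : ℝ) * ∑ i ∈ Finset.Icc 1 K,
        Real.log (1 + (a i ^ 2 - a (i - 1) ^ 2) * (∑ j ∈ Finset.Icc i K, b j ^ 2) /
          (a (i - 1) ^ 2 * (∑ j ∈ Finset.Icc i K, b j ^ 2) + 1)) :=
  sic_sum_rate_telescoping_of_tail K a b (fun i => ∑ j ∈ Icc i K, b j ^ 2) ha0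
    (fun _ => sum_nonneg fun j _ => sq_nonneg (b j))
    (fun i hi => by
      rw [Icc_add_one_left_eq_Ioc, ← add_sum_Ioc_eq_sum_Icc (mem_Icc.1 hi).2])
    (by simp)

/-- Telescoping identity for the SIC sum rate of the K-user Gaussian degraded
interference channel: with `a 0 = 0` and `S i = ∑_{j=i}^K b j ^ 2`,
`∑_{i=1}^K (1/2) log (1 + a_i² b_i² / (a_i² S_{i+1} + 1))
  = (1/2) ∑_{i=1}^K log (1 + (a_i² - a_{i-1}²) S_i / (a_{i-1}² S_i + 1))`. -/
theorem sic_sum_rate_telescoping (K : ℕ) (hK : 1 ≤ K) (a b : ℕ → ℝ) (ha0 : a 0 = 0) :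
    ∑ i ∈ Finset.Icc 1 K, (1 / 2 : ℝ) *
        Real.log (1 + a i ^ 2 * b i ^ 2 /
          (a i ^ 2 * (∑ j ∈ Finset.Icc (i + 1) K, b j ^ 2) + 1)) =
      (1 / 2 : ℝ) * ∑ i ∈ Finset.Icc 1 K,
        Real.log (1 + (a i ^ 2 - a (i - 1) ^ 2) * (∑ j ∈ Finset.Icc i K, b j ^ 2) /
          (a (i - 1) ^ 2 * (∑ j ∈ Finset.Icc i K, b j ^ 2) + 1)) :=
  sic_sum_rate_telescoping_general K a b ha0
end

section
/- Let K ≥ 1 and let a_1, …, a_K be real numbers with 0 < a_1 ≤ a_2 ≤ … ≤ a_K, set a_0 = 0 and c_i = √(a_i² − a_{i-1}²), and let b_1, …, b_K be real numbers. Let T be the K×K matrix whose i-th column is t_i, defined by t_0 = 0 and t_i = (a_{i-1}/a_i)·t_{i-1} + (c_i/a_i)·e_i. Let d_{i,j} (1 ≤ i, j ≤ K) be any real numbers with d_{i,j} = 1 whenever i ≤ j, and let G be the K×K matrix with entries g_{i,j} = c_i·b_j·d_{i,j}. Then for all indices with i ≤ j, the (i,j) entry of TᵀG equals a_i·b_j;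 that is, the upper-triangular part of TᵀG coincides with the upper-triangular part of the rank-one matrix a bᵀ. -/
open Finset Matrix

/-!
Write `γ = (c_1, …, c_K)`. Since `t_i` is a combination of `e_1, …, e_i`, only the terms with
`k ≤ i ≤ j` survive in `(TᵀG)_{ij} = ∑_k (t_i)_k c_k b_j d_{k,j}`, and for those `d_{k,j} = 1`;
so the entry is `⟨t_i, γ⟩ b_j`. The recursion gives
`⟨t_i, γ⟩ = (a_{i-1} ⟨t_{i-1}, γ⟩ + c_i²) / a_i`, and `c_i² = a_i² - a_{i-1}²` turns this
into `⟨t_i, γ⟩ = a_i` by induction.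
-/

section TriangularRecursion

variable {K : ℕ}

theorem triangularRec_apply_eq_zero {R : Type*} [Semiring R] {t : ℕ → Fin K → R} {α β : ℕ → R}
    (ht0 : t 0 = 0)
    (hrec : ∀ i : Fin K, t (i.val + 1) = α i.val • t i.val + β i.val • Pi.single i 1) :
    ∀ n ≤ K, ∀ k : Fin K, n ≤ k.val → t n k = 0 := by
  intro n
  induction n with
  | zero => simp [ht0]
  | succ m ih =>
    intro hm k hk
    have hne : k ≠ ⟨m, by omega⟩ := fun h => by simp [Fin.ext_iff] at h; omega
    simp [hrec ⟨m, by omega⟩, ih (by omega) k (by omega), hne]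

theorem triangularRec_dotProduct {𝕜 : Type*} [Field 𝕜] {t : ℕ → Fin K → 𝕜} {a c : ℕ → 𝕜}
    (ht0 : t 0 = 0) (ha0 : a 0 = 0)
    (hrec : ∀ i : Fin K, t (i.val + 1) =
      (a i.val / a (i.val + 1)) • t i.val + (c (i.val + 1) / a (i.val + 1)) • Pi.single i 1)
    (ha : ∀ m < K, a (m + 1) ≠ 0)
    (hc : ∀ m < K, c (m + 1) ^ 2 = a (m + 1) ^ 2 - a m ^ 2) :
    ∀ n ≤ K, t n ⬝ᵥ (fun k => c (k.val + 1)) = a n := by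
  intro n
  induction n with
  | zero => simp [ht0, ha0]
  | succ m ih =>
    intro hm
    rw [hrec ⟨m, hm⟩, add_dotProduct, smul_dotProduct, smul_dotProduct, single_dotProduct,
      ih (Nat.le_of_succ_le hm), smul_eq_mul, smul_eq_mul, one_mul]
    field_simp [ha m hm]
    linear_combination hc m hm

end TriangularRecursion

theorem transpose_mul_apply_eq_dotProduct_mul {R : Type*} [CommSemiring R] {K : ℕ}
    {T G : Matrix (Fin K) (Fin K) R} {u v : Fin K → R} {x : R} {i j : Fin K}
    (hT : ∀ k, T k i = u k) (hu : ∀ k, i < k → u k = 0) (hG : ∀ k ≤ i, G k j = v k * x) :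
    (Tᵀ * G) i j = (u ⬝ᵥ v) * x := by
  rw [mul_apply, dotProduct, sum_mul]
  refine sum_congr rfl fun k _ => ?_
  rw [transpose_apply, hT]
  rcases le_or_gt k i with hk | hk
  · rw [hG k hk, mul_assoc]
  · simp [hu k hk]

theorem monotoneOn_Icc_zero_of_le_add_one {a : ℕ → ℝ} {K : ℕ} (ha0 : a 0 = 0) (ha1 : 0 ≤ a 1)
    (hmono : ∀ i ∈ Ico 1 K, a i ≤ a (i + 1)) : MonotoneOn a (Set.Icc 0 K) := by
  refine monotoneOn_of_le_succ Set.ordConnected_Icc fun m _ _ hm => ?_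
  rw [Order.succ_eq_add_one] at hm ⊢
  rcases Nat.eq_zero_or_pos m with rfl | hm0
  · rwa [ha0]
  · exact hmono m (mem_Ico.2 ⟨hm0, hm.2⟩)

theorem genie_TtG_upper_triangular_part_general (K : ℕ)
    (a : ℕ → ℝ) (ha0 : a 0 = 0) (hpos : 0 < a 1)
    (hmono : ∀ i ∈ Finset.Ico 1 K, a i ≤ a (i + 1))
    (b : ℕ → ℝ)
    (c : ℕ → ℝ) (hc : ∀ i ∈ Finset.Icc 1 K, c i = Real.sqrt (a i ^ 2 - a (i - 1) ^ 2))
    (t : ℕ → Fin K → ℝ) (ht0 : t 0 = 0)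
    (htrec : ∀ i : Fin K,
      t (i.val + 1) = (a i.val / a (i.val + 1)) • t i.val +
        (c (i.val + 1) / a (i.val + 1)) • (Pi.single i (1:ℝ) : Fin K → ℝ))
    (T : Matrix (Fin K) (Fin K) ℝ) (hT : ∀ i j : Fin K, T i j = t (j.val + 1) i)
    (d : ℕ → ℕ → ℝ) (hd : ∀ i j : ℕ, i ≤ j → d i j = 1)
    (G : Matrix (Fin K) (Fin K) ℝ)
    (hG : ∀ i j : Fin K, G i j = c (i.val + 1) * b (j.val + 1) * d (i.val + 1) (j.val + 1)) :
    ∀ i j : Fin K, i ≤ j → (Tᵀ * G) i j = a (i.val + 1) * b (j.val + 1) := by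
  have ha_mono := monotoneOn_Icc_zero_of_le_add_one ha0 hpos.le hmono
  have ha_le : ∀ m < K, a m ≤ a (m + 1) := fun m hm =>
    ha_mono ⟨m.zero_le, hm.le⟩ ⟨(m + 1).zero_le, hm⟩ m.le_succ
  have ha_ne : ∀ m < K, a (m + 1) ≠ 0 := fun m hm =>
    (hpos.trans_le (ha_mono ⟨zero_le_one, by omega⟩ ⟨(m + 1).zero_le, hm⟩ (by omega))).ne'
  have hc_sq : ∀ m < K, c (m + 1) ^ 2 = a (m + 1) ^ 2 - a m ^ 2 := fun m hm => by
    have ha_nonneg : 0 ≤ a m := ha0 ▸ ha_mono ⟨le_rfl, K.zero_le⟩ ⟨m.zero_le, hm.le⟩ m.zero_le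
    rw [hc (m + 1) (mem_Icc.2 ⟨by omega, hm⟩), Nat.add_sub_cancel,
      Real.sq_sqrt (sub_nonneg.2 (pow_le_pow_left₀ ha_nonneg (ha_le m hm) 2))]
  intro i j hij
  rw [transpose_mul_apply_eq_dotProduct_mul (v := fun k => c (k.val + 1)) (fun k => hT k i)
      (fun k hk => triangularRec_apply_eq_zero (α := fun m => a m / a (m + 1))
        (β := fun m => c (m + 1) / a (m + 1)) ht0 htrec (i.val + 1) i.isLt k hk)
      (fun k hk => by rw [hG, hd _ _ (by omega), mul_one]),
    triangularRec_dotProduct ht0 ha0 htrec ha_ne hc_sq (i.val + 1) i.isLt]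

/-- The upper-triangular part of `TᵀG` coincides with the upper-triangular part of
the rank-one matrix `a bᵀ`, for the matrices `T` (with columns `t_i`) and
`G = (c_i b_j d_{i,j})` constructed in the genie-MAC outer bound for the degraded
channel, with `d_{i,j} = 1` for `i ≤ j`. -/
theorem genie_TtG_upper_triangular_part (K : ℕ) (hK : 1 ≤ K)
    (a : ℕ → ℝ) (ha0 : a 0 = 0) (hpos : 0 < a 1)
    (hmono : ∀ i ∈ Finset.Ico 1 K, a i ≤ a (i + 1))
    (b : ℕ → ℝ)
    (c : ℕ → ℝ) (hc : ∀ i ∈ Finset.Icc 1 K, c i = Real.sqrt (a i ^ 2 - a (i - 1) ^ 2))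
    (t : ℕ → Fin K → ℝ) (ht0 : t 0 = 0)
    (htrec : ∀ i : Fin K,
      t (i.val + 1) = (a i.val / a (i.val + 1)) • t i.val +
        (c (i.val + 1) / a (i.val + 1)) • (Pi.single i (1:ℝ) : Fin K → ℝ))
    (T : Matrix (Fin K) (Fin K) ℝ) (hT : ∀ i j : Fin K, T i j = t (j.val + 1) i)
    (d : ℕ → ℕ → ℝ) (hd : ∀ i j : ℕ, i ≤ j → d i j = 1)
    (G : Matrix (Fin K) (Fin K) ℝ)
    (hG : ∀ i j : Fin K, G i j = c (i.val + 1) * b (j.val + 1) * d (i.val + 1) (j.val + 1)) :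
    ∀ i j : Fin K, i ≤ j → (Tᵀ * G) i j = a (i.val + 1) * b (j.val + 1) :=
  genie_TtG_upper_triangular_part_general K a ha0 hpos hmono b c hc t ht0 htrec T hT d hd G hG
end

section
/- Let K ≥ 1 and let a_1, …, a_K be real numbers with 0 < a_1 ≤ a_2 ≤ … ≤ a_K, set a_0 = 0 and c_i = √(a_i² − a_{i-1}²), and let b_1, …, b_K be real numbers. Let T be the K×K matrix whose i-th column is t_i, defined by t_0 = 0 and t_i = (a_{i-1}/a_i)·t_{i-1} + (c_i/a_i)·e_i, and let G be the K×K matrix with entries g_{i,j} = c_i·b_j·d_{i,j}, where d_{i,j} are arbitrary real numbers subject to d_{i,j} = 1 for i ≤ j. Then the pair (G, T) is feasible for the genie-MAC optimization problem with H = a bᵀ, P = N = 1: (TᵀG)_{i,j} = a_i·b_j for all i ≤ j, and t_iᵀ t_i ≤ 1 for every i. -/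
open Finset Matrix

/-!
Unrolling the recursion, `a_n t_n = c_1 e_1 + ⋯ + c_n e_n`, and `c_1² + ⋯ + c_n² = a_n²` telescopes.
So every column `t_i` is a unit vector, and `(TᵀG)_{i,j} = (b_j / a_i) (c_1² + ⋯ + c_i²) = a_i b_j`;
only the entries `d_{k,j}` with `k ≤ i ≤ j` enter, and these are `1`.
-/

theorem Fin.sum_univ_ite_val_lt {M : Type*} [AddCommMonoid M] {K n : ℕ} (hn : n ≤ K)
    (f : ℕ → M) : ∑ k : Fin K, (if k.val < n then f k else 0) = ∑ m ∈ range n, f m := by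
  rw [Fin.sum_univ_eq_sum_range (fun m => if m < n then f m else 0), ← sum_filter]
  congr 1
  ext m
  simp only [mem_filter, mem_range]
  omega

theorem pos_of_mem_Icc_of_le_add_one {α : Type*} [Preorder α] [Zero α] {K : ℕ} {a : ℕ → α}
    (hpos : 0 < a 1) (hmono : ∀ i ∈ Ico 1 K, a i ≤ a (i + 1)) {n : ℕ} (hn : n ∈ Icc 1 K) :
    0 < a n := by
  obtain ⟨h1, hnK⟩ := mem_Icc.mp hn
  have hmon : MonotoneOn a (Set.Icc 1 K) := monotoneOn_of_le_add_one Set.ordConnected_Icc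
    fun i _ hi hi' => hmono i (by simp_all)
  exact hpos.trans_le (hmon ⟨le_rfl, h1.trans hnK⟩ ⟨h1, hnK⟩ h1)

theorem sum_range_sq_eq_sq {R : Type*} [CommRing R] {a c : ℕ → R} {n : ℕ} (ha0 : a 0 = 0)
    (hc : ∀ m < n, c (m + 1) ^ 2 = a (m + 1) ^ 2 - a m ^ 2) :
    ∑ m ∈ range n, c (m + 1) ^ 2 = a n ^ 2 := by
  rw [sum_congr rfl fun m hm => hc m (mem_range.mp hm), sum_range_sub (fun m => a m ^ 2), ha0]
  ring

theorem apply_eq_ite_of_rec {𝕜 : Type*} [Field 𝕜] {K : ℕ} {a c : ℕ → 𝕜} {t : ℕ → Fin K → 𝕜}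
    (ht0 : t 0 = 0)
    (htrec : ∀ i : Fin K, t (i.val + 1) = (a i.val / a (i.val + 1)) • t i.val +
        (c (i.val + 1) / a (i.val + 1)) • (Pi.single i (1 : 𝕜) : Fin K → 𝕜))
    (ha : ∀ n ∈ Icc 1 K, a n ≠ 0) :
    ∀ n ≤ K, ∀ k : Fin K, t n k = if k.val < n then c (k.val + 1) / a n else 0 := by
  intro n
  induction n with
  | zero => simp [ht0]
  | succ n ih =>
    intro hn k
    rw [htrec ⟨n, hn⟩, Pi.add_apply, Pi.smul_apply, Pi.smul_apply, ih (by omega), Pi.single_apply]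
    rcases lt_trichotomy k.val n with hk | hk | hk
    · have : a n ≠ 0 := ha n (by simp; omega)
      simp only [hk, hk.trans (Nat.lt_succ_self n), Fin.ext_iff, hk.ne, ↓reduceIte, smul_eq_mul,
        mul_zero, add_zero]
      field_simp
    · simp [hk, Fin.ext_iff]
    · simp [Fin.ext_iff, hk.ne', hk.not_gt, show ¬ k.val < n + 1 by omega]

theorem genie_G_T_feasible_general (K : ℕ)
    (a : ℕ → ℝ) (ha0 : a 0 = 0) (hpos : 0 < a 1)
    (hmono : ∀ i ∈ Finset.Ico 1 K, a i ≤ a (i + 1))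
    (b : ℕ → ℝ)
    (c : ℕ → ℝ) (hc : ∀ i ∈ Finset.Icc 1 K, c i = Real.sqrt (a i ^ 2 - a (i - 1) ^ 2))
    (t : ℕ → Fin K → ℝ) (ht0 : t 0 = 0)
    (htrec : ∀ i : Fin K,
      t (i.val + 1) = (a i.val / a (i.val + 1)) • t i.val +
        (c (i.val + 1) / a (i.val + 1)) • (Pi.single i (1:ℝ) : Fin K → ℝ))
    (T : Matrix (Fin K) (Fin K) ℝ) (hT : ∀ i j : Fin K, T i j = t (j.val + 1) i)
    (d : ℕ → ℕ → ℝ) (hd : ∀ i j : ℕ, i ≤ j → d i j = 1)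
    (G : Matrix (Fin K) (Fin K) ℝ)
    (hG : ∀ i j : Fin K, G i j = c (i.val + 1) * b (j.val + 1) * d (i.val + 1) (j.val + 1)) :
    (∀ i j : Fin K, i ≤ j → (Tᵀ * G) i j = a (i.val + 1) * b (j.val + 1)) ∧
      (∀ i : Fin K, (∑ j : Fin K, T j i * T j i) ≤ 1) := by
  have hapos : ∀ n ∈ Icc 1 K, 0 < a n := fun n hn => pos_of_mem_Icc_of_le_add_one hpos hmono hn
  have hsq : ∀ m < K, c (m + 1) ^ 2 = a (m + 1) ^ 2 - a m ^ 2 := by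
    intro m hm
    obtain ⟨ham, hle⟩ : 0 ≤ a m ∧ a m ≤ a (m + 1) := by
      rcases m with _ | m
      · simp [ha0, hpos.le]
      · exact ⟨(hapos _ (by simp; omega)).le, hmono _ (by simp; omega)⟩
    rw [hc _ (by simp; omega), Nat.add_sub_cancel,
      Real.sq_sqrt (sub_nonneg.mpr (pow_le_pow_left₀ ham hle 2))]
  have hsum : ∀ n ≤ K, ∑ m ∈ range n, c (m + 1) ^ 2 = a n ^ 2 := fun n hn =>
    sum_range_sq_eq_sq ha0 fun m hm => hsq m (by omega)
  have hcol : ∀ i k : Fin K,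
      T k i = if k.val < i.val + 1 then c (k.val + 1) / a (i.val + 1) else 0 :=
    fun i k => (hT k i).trans
      (apply_eq_ite_of_rec ht0 htrec (fun n hn => (hapos n hn).ne') _ i.isLt k)
  constructor
  · intro i j hij
    have hai : a (i.val + 1) ≠ 0 := (hapos _ (mem_Icc.mpr ⟨by omega, i.isLt⟩)).ne'
    calc (Tᵀ * G) i j
        = ∑ m ∈ range (i.val + 1), c (m + 1) ^ 2 * (b (j.val + 1) / a (i.val + 1)) := by
          rw [mul_apply, ← Fin.sum_univ_ite_val_lt i.isLt]
          refine sum_congr rfl fun k _ => ?_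
          rw [transpose_apply, hcol, hG]
          split_ifs with hk
          · rw [hd _ _ (by rw [Fin.le_def] at hij; omega)]
            ring
          · ring
      _ = a (i.val + 1) * b (j.val + 1) := by
          rw [← sum_mul, hsum _ i.isLt]
          field_simp
  · intro i
    have hai : a (i.val + 1) ≠ 0 := (hapos _ (mem_Icc.mpr ⟨by omega, i.isLt⟩)).ne'
    refine le_of_eq ?_
    calc ∑ k : Fin K, T k i * T k i
        = ∑ m ∈ range (i.val + 1), c (m + 1) ^ 2 / a (i.val + 1) ^ 2 := by
          rw [← Fin.sum_univ_ite_val_lt i.isLt]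
          refine sum_congr rfl fun k _ => ?_
          rw [hcol]
          split_ifs <;> ring
      _ = 1 := by rw [← sum_div, hsum _ i.isLt, div_self (pow_ne_zero 2 hai)]

/-- The pair `(G, T)` constructed for the degraded channel (with `H = a bᵀ`,
`P = N = 1`) is feasible for the genie-MAC optimization problem:
`(TᵀG)_{i,j} = a_i b_j` for all `i ≤ j`, and each column `t_i` of `T` satisfies
`t_iᵀ t_i ≤ 1`. -/
theorem genie_G_T_feasible (K : ℕ) (hK : 1 ≤ K)
    (a : ℕ → ℝ) (ha0 : a 0 = 0) (hpos : 0 < a 1)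
    (hmono : ∀ i ∈ Finset.Ico 1 K, a i ≤ a (i + 1))
    (b : ℕ → ℝ)
    (c : ℕ → ℝ) (hc : ∀ i ∈ Finset.Icc 1 K, c i = Real.sqrt (a i ^ 2 - a (i - 1) ^ 2))
    (t : ℕ → Fin K → ℝ) (ht0 : t 0 = 0)
    (htrec : ∀ i : Fin K,
      t (i.val + 1) = (a i.val / a (i.val + 1)) • t i.val +
        (c (i.val + 1) / a (i.val + 1)) • (Pi.single i (1:ℝ) : Fin K → ℝ))
    (T : Matrix (Fin K) (Fin K) ℝ) (hT : ∀ i j : Fin K, T i j = t (j.val + 1) i)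
    (d : ℕ → ℕ → ℝ) (hd : ∀ i j : ℕ, i ≤ j → d i j = 1)
    (G : Matrix (Fin K) (Fin K) ℝ)
    (hG : ∀ i j : Fin K, G i j = c (i.val + 1) * b (j.val + 1) * d (i.val + 1) (j.val + 1)) :
    (∀ i j : Fin K, i ≤ j → (Tᵀ * G) i j = a (i.val + 1) * b (j.val + 1)) ∧
      (∀ i : Fin K, (∑ j : Fin K, T j i * T j i) ≤ 1) :=
  genie_G_T_feasible_general K a ha0 hpos hmono b c hc t ht0 htrec T hT d hd G hG
end

section
/- Let K ≥ 1, let H be a K×K real matrix, and let P > 0 and N > 0 be real. Define f* as the infimum of (1/2)·log det(I + P·Σ⁻¹·G·Gᵀ) over all triples (G, Σ, T) of K×K real matrices such that Σ is symmetric positive definite, (TᵀG)_{i,j} = H_{i,j} for all i ≤ j, and (TᵀΣT)_{i,i} ≤ N for all i. Define g* as the infimum of (1/2)·log det(I + P·G·Gᵀ) over all pairs (G, T) of K×K real matrices such that (TᵀG)_{i,j} = H_{i,j} for all i ≤ j and (TᵀT)_{i,i} ≤ N for all i. Then f* = g*. -/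
/-!
Whitening the noise. Write `Σ = Bᵀ B` with `B` invertible (e.g. `B = Σ^{1/2}`). The receiver
`((Bᵀ)⁻¹ G, I, B T)` has the same products `Tᵀ G` and the same effective noise `Tᵀ Σ T` as
`(G, Σ, T)`, and, by Sylvester's identity `det (1 + X Y) = det (1 + Y X)`, the same rate, since
`Σ⁻¹ G Gᵀ = B⁻¹ · (Bᵀ)⁻¹ G Gᵀ`. Conversely `Σ = I` is itself admissible, so both problems have
the same feasible values.
-/

open Matrix

namespace Matrix

variable {n : Type*} [Fintype n] [DecidableEq n]

open scoped MatrixOrder in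
theorem PosDef.exists_isUnit_transpose_mul_self_eq {S : Matrix n n ℝ} (hS : S.PosDef) :
    ∃ B : Matrix n n ℝ, IsUnit B ∧ Bᵀ * B = S := by
  have hS₀ : 0 ≤ S := hS.posSemidef.nonneg
  refine ⟨CFC.sqrt S, (CFC.isUnit_sqrt_iff S hS₀).2 hS.isUnit, ?_⟩
  rw [(isHermitian_iff_isSymm.1 (CFC.sqrt_nonneg S).posSemidef.isHermitian).eq]
  exact CFC.sqrt_mul_sqrt_self S hS₀

variable {R : Type*} [CommRing R]

theorem exists_whitened_of_isUnit {B : Matrix n n R} (hB : IsUnit B) (G T : Matrix n n R)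
    (c : R) :
    ∃ G' T' : Matrix n n R, T'ᵀ * G' = Tᵀ * G ∧ T'ᵀ * T' = Tᵀ * (Bᵀ * B) * T ∧
      (1 + c • (G' * G'ᵀ)).det = (1 + c • ((Bᵀ * B)⁻¹ * G * Gᵀ)).det := by
  have hBtdet : IsUnit Bᵀ.det := (isUnit_iff_isUnit_det _).1 ((isUnit_transpose B).2 hB)
  refine ⟨(Bᵀ)⁻¹ * G, B * T, ?_, ?_, ?_⟩
  · rw [transpose_mul, Matrix.mul_assoc, ← Matrix.mul_assoc Bᵀ, mul_nonsing_inv _ hBtdet,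
      Matrix.one_mul]
  · simp only [transpose_mul, Matrix.mul_assoc]
  · rw [transpose_mul, transpose_nonsing_inv, transpose_transpose, Matrix.mul_inv_rev]
    calc (1 + c • ((Bᵀ)⁻¹ * G * (Gᵀ * B⁻¹))).det
        = (1 + (c • ((Bᵀ)⁻¹ * G * Gᵀ)) * B⁻¹).det := by
          rw [Matrix.smul_mul, Matrix.mul_assoc ((Bᵀ)⁻¹ * G)]
      _ = (1 + B⁻¹ * (c • ((Bᵀ)⁻¹ * G * Gᵀ))).det := det_one_add_mul_comm _ _
      _ = (1 + c • (B⁻¹ * (Bᵀ)⁻¹ * G * Gᵀ)).det := by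
          rw [Matrix.mul_smul, Matrix.mul_assoc B⁻¹, Matrix.mul_assoc B⁻¹]

end Matrix

theorem genie_opt_sigma_eq_id_general (K : ℕ) (H : Matrix (Fin K) (Fin K) ℝ)
    (P N : ℝ) :
    sInf {x : ℝ | ∃ G Sg T : Matrix (Fin K) (Fin K) ℝ,
        Sg.PosDef ∧
        (∀ i j : Fin K, i ≤ j → (Tᵀ * G) i j = H i j) ∧
        (∀ i : Fin K, (Tᵀ * Sg * T) i i ≤ N) ∧
        x = (1 / 2) * Real.log ((1 + P • (Sg⁻¹ * G * Gᵀ)).det)} =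
      sInf {x : ℝ | ∃ G T : Matrix (Fin K) (Fin K) ℝ,
        (∀ i j : Fin K, i ≤ j → (Tᵀ * G) i j = H i j) ∧
        (∀ i : Fin K, (Tᵀ * T) i i ≤ N) ∧
        x = (1 / 2) * Real.log ((1 + P • (G * Gᵀ)).det)} := by
  congr 1
  ext x
  constructor
  · rintro ⟨G, Sg, T, hSg, hH, hN, rfl⟩
    obtain ⟨B, hB, rfl⟩ := hSg.exists_isUnit_transpose_mul_self_eq
    obtain ⟨G', T', hTG, hTT, hdet⟩ := exists_whitened_of_isUnit hB G T P
    exact ⟨G', T', hTG ▸ hH, hTT ▸ hN, by rw [hdet]⟩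
  · rintro ⟨G, T, hH, hN, rfl⟩
    exact ⟨G, 1, T, PosDef.one, hH, by simpa using hN, by simp⟩

/-- Fixing the noise covariance `Σ = I` does not change the optimal value of the
genie-MAC outer-bound optimization problem. -/
theorem genie_opt_sigma_eq_id (K : ℕ) (hK : 1 ≤ K) (H : Matrix (Fin K) (Fin K) ℝ)
    (P N : ℝ) (hP : 0 < P) (hN : 0 < N) :
    sInf {x : ℝ | ∃ G Sg T : Matrix (Fin K) (Fin K) ℝ,
        Sg.PosDef ∧
        (∀ i j : Fin K, i ≤ j → (Tᵀ * G) i j = H i j) ∧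
        (∀ i : Fin K, (Tᵀ * Sg * T) i i ≤ N) ∧
        x = (1 / 2) * Real.log ((1 + P • (Sg⁻¹ * G * Gᵀ)).det)} =
      sInf {x : ℝ | ∃ G T : Matrix (Fin K) (Fin K) ℝ,
        (∀ i j : Fin K, i ≤ j → (Tᵀ * G) i j = H i j) ∧
        (∀ i : Fin K, (Tᵀ * T) i i ≤ N) ∧
        x = (1 / 2) * Real.log ((1 + P • (G * Gᵀ)).det)} :=
  genie_opt_sigma_eq_id_general K H P N
end

section
/- Let K ≥ 1, let H be a K×K real matrix, and let P > 0 and N > 0 be real. Define f* as the infimum of (1/2)·log det(I + P·Σ⁻¹·G·Gᵀ) over all triples (G, Σ, T) of K×K real matrices with Σ symmetric positive definite, (TᵀG)_{i,j} = H_{i,j} for all i ≤ j, and (TᵀΣT)_{i,i} ≤ N for all i. Define h* as the infimum of (1/2)·log det(I + P·Σ⁻¹·G·Gᵀ) over all pairs (G, Σ) with Σ symmetric positive definite, G_{i,j} = H_{i,j} for all i ≤ j, and Σ_{i,i} ≤ N for all i (i.e., the sub-problem obtained from f* by fixing T = I). Then h* = f*. -/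
/-!
A feasible `(G, Σ, T)` of the outer bound is dominated by the feasible point
`(TᵀG, Σ')` of the `T = I` problem, where `Σ' = s TᵀΣT + (1 - s) N I` with `0 < s < 1`.
Indeed `Tᵀ(sΣ)T ⪯ Σ'`, so a Schur complement gives `TΣ'⁻¹Tᵀ ⪯ (sΣ)⁻¹`; by Sylvester's identity
`det(I + AB) = det(I + BA)` and the monotonicity of `det` in the Loewner order, the value at
`(TᵀG, Σ')` is at most the value at `(G, Σ)` with power `P / s`. Letting `s → 1` gives
`h* ≤ f*`, and `T = I` gives the reverse inequality.
-/

open Matrix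

namespace Matrix

variable {m n : Type*} [Fintype m] [Fintype n] [DecidableEq m] [DecidableEq n]

theorem PosSemidef.one_le_det_one_add {M : Matrix n n ℝ} (hM : M.PosSemidef) :
    1 ≤ (1 + M).det := by
  set U := hM.1.eigenvectorUnitary
  have hconj : 1 + M =
      (U : Matrix n n ℝ) * (1 + diagonal hM.1.eigenvalues) * star (U : Matrix n n ℝ) := by
    conv_lhs => rw [hM.1.spectral_theorem, ← map_one (Unitary.conjStarAlgAut ℝ _ U), ← map_add]
    simp
  have hU : (U : Matrix n n ℝ).det * (star (U : Matrix n n ℝ)).det = 1 := by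
    rw [← det_mul, mem_unitaryGroup_iff.mp U.2, det_one]
  rw [hconj, det_mul, det_mul, mul_right_comm, hU, one_mul, ← diagonal_one, diagonal_add,
    det_diagonal]
  exact Finset.one_le_prod fun i _ => le_add_of_nonneg_right (hM.eigenvalues_nonneg i)

open scoped MatrixOrder in
theorem PosDef.det_le_det_add {A D : Matrix n n ℝ} (hA : A.PosDef) (hD : D.PosSemidef) :
    A.det ≤ (A + D).det := by
  set R := CFC.sqrt D
  have hR : R * R = D := CFC.sqrt_mul_sqrt_self D hD.nonneg
  have hRA : (R * A⁻¹ * R).PosSemidef := by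
    have := hA.inv.posSemidef.mul_mul_conjTranspose_same R
    rwa [(CFC.sqrt_nonneg D).posSemidef.1.eq] at this
  have hfactor : A + D = A * (1 + A⁻¹ * R * R) := by
    rw [mul_add, mul_one, ← Matrix.mul_assoc, ← Matrix.mul_assoc,
      mul_nonsing_inv _ (A.isUnit_iff_isUnit_det.mp hA.isUnit), Matrix.one_mul, hR]
  rw [hfactor, det_mul, det_one_add_mul_comm, ← Matrix.mul_assoc]
  exact le_mul_of_one_le_right hA.det_pos.le hRA.one_le_det_one_add

theorem det_one_add_smul_inv_mul_mul_transpose {α : Type*} [CommRing α] (c : α)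
    (S : Matrix n n α) (G : Matrix n m α) :
    (1 + c • (S⁻¹ * G * Gᵀ)).det = (1 + c • (Gᵀ * S⁻¹ * G)).det := by
  rw [← Matrix.mul_smul, det_one_add_mul_comm, Matrix.smul_mul, Matrix.mul_assoc]

theorem one_le_det_one_add_smul_inv_mul_mul_transpose {c : ℝ} (hc : 0 ≤ c)
    {S : Matrix n n ℝ} (hS : S.PosDef) (G : Matrix n m ℝ) :
    1 ≤ (1 + c • (S⁻¹ * G * Gᵀ)).det := by
  rw [det_one_add_smul_inv_mul_mul_transpose]
  refine PosSemidef.one_le_det_one_add (.smul ?_ hc)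
  simpa using hS.inv.posSemidef.conjTranspose_mul_mul_same G

theorem PosDef.posSemidef_inv_sub_of_posSemidef_sub {S : Matrix n n ℝ} {S' : Matrix m m ℝ}
    (hS : S.PosDef) (hS' : S'.PosDef) {T : Matrix n m ℝ} (h : (S' - Tᵀ * S * T).PosSemidef) :
    (S⁻¹ - T * S'⁻¹ * Tᵀ).PosSemidef := by
  have : Invertible S' := hS'.isUnit.invertible
  have : Invertible S⁻¹ := hS.inv.isUnit.invertible
  have hblock : (fromBlocks S' Tᵀ Tᵀᴴ S⁻¹).PosSemidef := by
    rwa [PosDef.fromBlocks₂₂ S' Tᵀ hS.inv,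
      nonsing_inv_nonsing_inv _ (S.isUnit_iff_isUnit_det.mp hS.isUnit),
      conjTranspose_eq_transpose_of_trivial]
  simpa using (PosDef.fromBlocks₁₁ Tᵀ S⁻¹ hS').mp hblock

theorem det_one_add_smul_inv_mul_mul_transpose_le {k : Type*} [Fintype k] [DecidableEq k]
    {S : Matrix n n ℝ} {S' : Matrix m m ℝ} (hS : S.PosDef) (hS' : S'.PosDef) {T : Matrix n m ℝ}
    (h : (S' - Tᵀ * S * T).PosSemidef) {c : ℝ} (hc : 0 ≤ c) (G : Matrix n k ℝ) :
    (1 + c • (S'⁻¹ * (Tᵀ * G) * (Tᵀ * G)ᵀ)).det ≤ (1 + c • (S⁻¹ * G * Gᵀ)).det := by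
  rw [det_one_add_smul_inv_mul_mul_transpose, det_one_add_smul_inv_mul_mul_transpose]
  have hX : (c • ((Tᵀ * G)ᵀ * S'⁻¹ * (Tᵀ * G))).PosSemidef :=
    .smul (by simpa using hS'.inv.posSemidef.conjTranspose_mul_mul_same (Tᵀ * G)) hc
  have hdiff : (c • (Gᵀ * S⁻¹ * G) - c • ((Tᵀ * G)ᵀ * S'⁻¹ * (Tᵀ * G))).PosSemidef := by
    have hsub : Gᵀ * S⁻¹ * G - (Tᵀ * G)ᵀ * S'⁻¹ * (Tᵀ * G) =
        Gᵀ * (S⁻¹ - T * S'⁻¹ * Tᵀ) * G := by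
      rw [transpose_mul, transpose_transpose]
      simp only [Matrix.mul_sub, Matrix.sub_mul, Matrix.mul_assoc]
    rw [← smul_sub, hsub]
    refine .smul ?_ hc
    simpa using (hS.posSemidef_inv_sub_of_posSemidef_sub hS' h).conjTranspose_mul_mul_same G
  simpa using (PosDef.one.add_posSemidef hX).det_le_det_add hdiff

theorem exists_posDef_diag_le_det_le {P c N : ℝ} (hP : 0 < P) (hPc : P < c) (hN : 0 < N)
    {k : Type*} [Fintype k] [DecidableEq k] {S : Matrix n n ℝ} (hS : S.PosDef)
    {T : Matrix n m ℝ} (hdiag : ∀ i, (Tᵀ * S * T) i i ≤ N) (G : Matrix n k ℝ) :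
    ∃ S' : Matrix m m ℝ, S'.PosDef ∧ (∀ i, S' i i ≤ N) ∧
      (1 + P • (S'⁻¹ * (Tᵀ * G) * (Tᵀ * G)ᵀ)).det ≤ (1 + c • (S⁻¹ * G * Gᵀ)).det := by
  -- Mixing in `(1 - s) N • 1` makes `Σ'` positive definite even for singular `T`; the price is
  -- comparing with `s • Σ` instead of `Σ`, which turns `P` into `P / s = c`.
  set s := P / c
  have hs0 : 0 < s := div_pos hP (hP.trans hPc)
  have hs1 : s < 1 := (div_lt_one (hP.trans hPc)).mpr hPc
  have hTST : (Tᵀ * S * T).PosSemidef := by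
    simpa using hS.posSemidef.conjTranspose_mul_mul_same T
  have hslack : (((1 - s) * N) • (1 : Matrix m m ℝ)).PosDef :=
    PosDef.one.smul (mul_pos (sub_pos.mpr hs1) hN)
  have hS' : (s • (Tᵀ * S * T) + ((1 - s) * N) • 1).PosDef :=
    PosDef.posSemidef_add (hTST.smul hs0.le) hslack
  refine ⟨_, hS', fun i => ?_, ?_⟩
  · have := hdiag i
    simp only [add_apply, smul_apply, one_apply_eq, smul_eq_mul, mul_one]
    nlinarith
  · have hgap : (s • (Tᵀ * S * T) + ((1 - s) * N) • 1 - Tᵀ * (s • S) * T).PosSemidef := by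
      simpa [Matrix.mul_smul, Matrix.smul_mul] using hslack.posSemidef
    have hscale : P • (s • S)⁻¹ = c • S⁻¹ := by
      have : Invertible s := invertibleOfNonzero hs0.ne'
      rw [inv_smul S s (S.isUnit_iff_isUnit_det.mp hS.isUnit), invOf_eq_inv, smul_smul]
      congr 1
      simp only [s]
      field_simp
    refine (det_one_add_smul_inv_mul_mul_transpose_le (hS.smul hs0) hS' hgap hP.le G).trans_eq
      ?_
    rw [← Matrix.smul_mul, ← Matrix.smul_mul, hscale, Matrix.smul_mul, Matrix.smul_mul]

theorem le_half_log_det_one_add_smul_of_forall_gt {a P : ℝ} {M : Matrix n n ℝ}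
    (hP : 0 < (1 + P • M).det) (h : ∀ c > P, a ≤ (1 / 2) * Real.log ((1 + c • M).det)) :
    a ≤ (1 / 2) * Real.log ((1 + P • M).det) := by
  have hcont : ContinuousAt (fun c : ℝ => (1 / 2) * Real.log ((1 + c • M).det)) P :=
    continuousAt_const.mul <| ContinuousAt.log (by fun_prop) hP.ne'
  exact ge_of_tendsto (hcont.mono_left (nhdsWithin_le_nhds (s := Set.Ioi P)))
    (eventually_nhdsWithin_of_forall h)

end Matrix

theorem genie_opt_T_eq_id_general (K : ℕ) (H : Matrix (Fin K) (Fin K) ℝ)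
    (P N : ℝ) (hP : 0 < P) (hN : 0 < N) :
    sInf {x : ℝ | ∃ G Sg : Matrix (Fin K) (Fin K) ℝ,
        Sg.PosDef ∧
        (∀ i j : Fin K, i ≤ j → G i j = H i j) ∧
        (∀ i : Fin K, Sg i i ≤ N) ∧
        x = (1 / 2) * Real.log ((1 + P • (Sg⁻¹ * G * Gᵀ)).det)} =
      sInf {x : ℝ | ∃ G Sg T : Matrix (Fin K) (Fin K) ℝ,
        Sg.PosDef ∧
        (∀ i j : Fin K, i ≤ j → (Tᵀ * G) i j = H i j) ∧
        (∀ i : Fin K, (Tᵀ * Sg * T) i i ≤ N) ∧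
        x = (1 / 2) * Real.log ((1 + P • (Sg⁻¹ * G * Gᵀ)).det)} := by
  have hdet_pos {Sg : Matrix (Fin K) (Fin K) ℝ} (hSg : Sg.PosDef)
      (G : Matrix (Fin K) (Fin K) ℝ) :
      0 < (1 + P • (Sg⁻¹ * G * Gᵀ)).det :=
    one_pos.trans_le (one_le_det_one_add_smul_inv_mul_mul_transpose hP.le hSg G)
  have hrate_nonneg {Sg : Matrix (Fin K) (Fin K) ℝ} (hSg : Sg.PosDef)
      (G : Matrix (Fin K) (Fin K) ℝ) :
      0 ≤ (1 / 2) * Real.log ((1 + P • (Sg⁻¹ * G * Gᵀ)).det) :=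
    mul_nonneg (by norm_num)
      (Real.log_nonneg (one_le_det_one_add_smul_inv_mul_mul_transpose hP.le hSg G))
  refine le_antisymm (le_csInf ⟨_, H, N • 1, 1, PosDef.one.smul hN, by simp, by simp, rfl⟩
    fun x ⟨G, Sg, T, hSg, hG, hdiag, hx⟩ => hx ▸ ?_) (csInf_le_csInf
      ⟨0, fun x ⟨G, Sg, _, hSg, _, _, hx⟩ => hx ▸ hrate_nonneg hSg G⟩
      ⟨_, H, N • 1, PosDef.one.smul hN, fun _ _ _ => rfl, by simp, rfl⟩
      fun x ⟨G, Sg, hSg, hG, hdiag, hx⟩ =>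
        ⟨G, Sg, 1, hSg, by simpa using hG, by simpa using hdiag, hx⟩)
  refine le_half_log_det_one_add_smul_of_forall_gt (hdet_pos hSg G) fun c hc => ?_
  obtain ⟨Sg', hSg', hdiag', hle⟩ := exists_posDef_diag_le_det_le hP hc hN hSg hdiag G
  have hrate : (1 / 2) * Real.log ((1 + P • (Sg'⁻¹ * (Tᵀ * G) * (Tᵀ * G)ᵀ)).det) ≤
      (1 / 2) * Real.log ((1 + c • (Sg⁻¹ * G * Gᵀ)).det) :=
    mul_le_mul_of_nonneg_left (Real.log_le_log (hdet_pos hSg' _) hle) (by norm_num)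
  exact le_trans (csInf_le ⟨0, fun x ⟨G, Sg, hSg, _, _, hx⟩ => hx ▸ hrate_nonneg hSg G⟩
    ⟨_, Sg', hSg', hG, hdiag', rfl⟩) hrate

/-- Fixing `T = I` in the genie-MAC outer-bound optimization (keeping the noise
covariance `Σ` free) does not change the optimal value. -/
theorem genie_opt_T_eq_id (K : ℕ) (hK : 1 ≤ K) (H : Matrix (Fin K) (Fin K) ℝ)
    (P N : ℝ) (hP : 0 < P) (hN : 0 < N) :
    sInf {x : ℝ | ∃ G Sg : Matrix (Fin K) (Fin K) ℝ,
        Sg.PosDef ∧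
        (∀ i j : Fin K, i ≤ j → G i j = H i j) ∧
        (∀ i : Fin K, Sg i i ≤ N) ∧
        x = (1 / 2) * Real.log ((1 + P • (Sg⁻¹ * G * Gᵀ)).det)} =
      sInf {x : ℝ | ∃ G Sg T : Matrix (Fin K) (Fin K) ℝ,
        Sg.PosDef ∧
        (∀ i j : Fin K, i ≤ j → (Tᵀ * G) i j = H i j) ∧
        (∀ i : Fin K, (Tᵀ * Sg * T) i i ≤ N) ∧
        x = (1 / 2) * Real.log ((1 + P • (Sg⁻¹ * G * Gᵀ)).det)} :=
  genie_opt_T_eq_id_general K H P N hP hN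
end

section
/- Let K ≥ 1, let H be a K×K real matrix, and let P > 0 and N > 0 be real. Define f* as the infimum of (1/2)·log det(I + P·Σ⁻¹·G·Gᵀ) over all triples (G, Σ, T) of K×K real matrices with Σ symmetric positive definite, (TᵀG)_{i,j} = H_{i,j} for all i ≤ j, and (TᵀΣT)_{i,i} ≤ N for all i. Define k* as the infimum of (1/2)·log det(I + P·Σ⁻¹) over all pairs (Σ, T) with Σ symmetric positive definite, T_{j,i} = H_{i,j} for all i ≤ j, and (TᵀΣT)_{i,i} ≤ N for all i (i.e., the sub-problem obtained from f* by fixing G = I). Then k* = f*. -/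
/-!
Fixing `G = I` only shrinks the feasible set, so `f* ≤ k*`. Conversely, for a feasible
`(G, Σ, T)` and `δ > 0` take `Σ' = (GᵀΣ⁻¹G + δI)⁻¹` and `T' = GᵀT`. Then `T'ᵀ = TᵀG` meets the
constraint on `H`, and `GᵀΣ⁻¹G ≤ Σ'⁻¹` gives `GΣ'Gᵀ ≤ Σ` by a Schur complement argument, hence
`T'ᵀΣ'T' ≤ TᵀΣT` on the diagonal. By Sylvester's determinant identity,
`det(I + PΣ⁻¹GGᵀ) = det(I + PGᵀΣ⁻¹G)`, which is the `δ → 0` limit of `det(I + PΣ'⁻¹)`.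
-/

open Matrix

theorem Real.sInf_eq_sInf_of_subset_of_forall_exists_lt {s t : Set ℝ} (hst : s ⊆ t)
    (h : ∀ x ∈ t, ∀ ε > 0, ∃ y ∈ s, y < x + ε) : sInf s = sInf t := by
  rcases s.eq_empty_or_nonempty with rfl | hs
  · have ht : t = ∅ := Set.eq_empty_of_forall_notMem fun x hx => by
      obtain ⟨y, hy, -⟩ := h x hx 1 one_pos
      exact hy
    rw [ht]
  by_cases hbdd : BddBelow s
  · obtain ⟨b, hb⟩ := hbdd
    have ht : BddBelow t := ⟨b, fun x hx => le_of_forall_pos_lt_add fun ε hε => by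
      obtain ⟨y, hy, hyx⟩ := h x hx ε hε
      exact (hb hy).trans_lt hyx⟩
    refine le_antisymm (le_csInf (hs.mono hst) fun x hx => le_of_forall_pos_lt_add fun ε hε => ?_)
      (csInf_le_csInf ht hs hst)
    obtain ⟨y, hy, hyx⟩ := h x hx ε hε
    exact (csInf_le ⟨b, hb⟩ hy).trans_lt hyx
  · rw [Real.sInf_of_not_bddBelow hbdd, Real.sInf_of_not_bddBelow (mt (BddBelow.mono hst) hbdd)]

namespace Matrix

variable {m n : Type*} [Fintype m] [Fintype n]

theorem det_one_add_smul_mul_comm [DecidableEq m] [DecidableEq n] {α : Type*} [CommRing α]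
    (c : α) (A : Matrix m n α) (B : Matrix n m α) :
    (1 + c • (A * B)).det = (1 + c • (B * A)).det := by
  rw [← Matrix.smul_mul, det_one_add_mul_comm, Matrix.mul_smul]

theorem PosDef.posSemidef_sub_mul_inv_mul_conjTranspose [DecidableEq m] [DecidableEq n]
    {K : Type*} [Field K] [PartialOrder K] [StarRing K] [StarOrderedRing K]
    {S : Matrix m m K} {A : Matrix n n K} (hS : S.PosDef)
    (hA : A.PosDef) {G : Matrix m n K} (h : (A - Gᴴ * S⁻¹ * G).PosSemidef) :
    (S - G * A⁻¹ * Gᴴ).PosSemidef := by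
  have := hS.isUnit.invertible
  have := hA.isUnit.invertible
  exact (PosDef.fromBlocks₂₂ S G hA).mp ((PosDef.fromBlocks₁₁ G A hS).mpr h)

theorem PosSemidef.diag_conjTranspose_mul_mul_le {R : Type*} [CommRing R] [PartialOrder R]
    [StarRing R] [IsOrderedAddMonoid R] {S M : Matrix m m R} (h : (S - M).PosSemidef)
    (T : Matrix m n R) (i : n) : (Tᴴ * M * T) i i ≤ (Tᴴ * S * T) i i := by
  have := (h.conjTranspose_mul_mul_same T).diag_nonneg (i := i)
  rwa [Matrix.mul_sub, Matrix.sub_mul, sub_apply, sub_nonneg] at this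

theorem exists_pos_log_det_one_add_smul_add_lt [DecidableEq n] {A : Matrix n n ℝ} {P : ℝ}
    (hA : (1 + P • A).det ≠ 0) {ε : ℝ} (hε : 0 < ε) :
    ∃ δ : ℝ, 0 < δ ∧ Real.log (1 + P • (A + δ • 1)).det < Real.log (1 + P • A).det + ε := by
  have hcont : ContinuousAt (fun δ : ℝ => Real.log (1 + P • (A + δ • 1)).det) 0 :=
    ContinuousAt.log (by fun_prop) (by simpa using hA)
  have hev := (hcont.eventually_lt (continuousAt_const (y := Real.log (1 + P • A).det + ε))
    (by simpa using hε)).filter_mono (nhdsWithin_le_nhds (s := Set.Ioi 0))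
  obtain ⟨δ, hδ, hδpos⟩ := (hev.and self_mem_nhdsWithin).exists
  exact ⟨δ, hδpos, by simpa using hδ⟩

end Matrix

theorem genie_opt_G_eq_id_general (K : ℕ) (H : Matrix (Fin K) (Fin K) ℝ)
    (P N : ℝ) (hP : 0 < P) :
    sInf {x : ℝ | ∃ Sg T : Matrix (Fin K) (Fin K) ℝ,
        Sg.PosDef ∧
        (∀ i j : Fin K, i ≤ j → T j i = H i j) ∧
        (∀ i : Fin K, (Tᵀ * Sg * T) i i ≤ N) ∧
        x = (1 / 2) * Real.log ((1 + P • Sg⁻¹).det)} =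
      sInf {x : ℝ | ∃ G Sg T : Matrix (Fin K) (Fin K) ℝ,
        Sg.PosDef ∧
        (∀ i j : Fin K, i ≤ j → (Tᵀ * G) i j = H i j) ∧
        (∀ i : Fin K, (Tᵀ * Sg * T) i i ≤ N) ∧
        x = (1 / 2) * Real.log ((1 + P • (Sg⁻¹ * G * Gᵀ)).det)} := by
  refine Real.sInf_eq_sInf_of_subset_of_forall_exists_lt ?_ ?_
  · rintro x ⟨Sg, T, hSg, hH, hN, rfl⟩
    exact ⟨1, Sg, T, hSg, fun i j hij => by simpa using hH i j hij, hN, by simp⟩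
  rintro x ⟨G, Sg, T, hSg, hH, hN, rfl⟩ ε hε
  set A := Gᵀ * Sg⁻¹ * G
  have hA : A.PosSemidef := by
    simpa using hSg.inv.posSemidef.conjTranspose_mul_mul_same G
  obtain ⟨δ, hδ, hlt⟩ := exists_pos_log_det_one_add_smul_add_lt
    (PosDef.one.add_posSemidef (hA.smul hP.le)).det_pos.ne' (mul_pos two_pos hε)
  have hδI : (δ • 1 : Matrix (Fin K) (Fin K) ℝ).PosDef := PosDef.one.smul hδ
  have hAδ : (A + δ • 1).PosDef := PosDef.posSemidef_add hA hδI
  refine ⟨_, ⟨(A + δ • 1)⁻¹, Gᵀ * T, hAδ.inv, fun i j hij => ?_, fun i => ?_, rfl⟩, ?_⟩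
  · rw [← hH i j hij, ← transpose_apply (Gᵀ * T), transpose_mul, transpose_transpose]
  · have hS : (Sg - G * (A + δ • 1)⁻¹ * Gᵀ).PosSemidef := by
      simpa using hSg.posSemidef_sub_mul_inv_mul_conjTranspose hAδ (G := G)
        (by simpa [A] using hδI.posSemidef)
    calc ((Gᵀ * T)ᵀ * (A + δ • 1)⁻¹ * (Gᵀ * T)) i i
        = (Tᵀ * (G * (A + δ • 1)⁻¹ * Gᵀ) * T) i i := by simp [Matrix.mul_assoc]
      _ ≤ (Tᵀ * Sg * T) i i := by simpa using hS.diag_conjTranspose_mul_mul_le T i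
      _ ≤ N := hN i
  · rw [nonsing_inv_nonsing_inv _ hAδ.det_pos.ne'.isUnit, det_one_add_smul_mul_comm,
      ← Matrix.mul_assoc]
    linarith

/-- Fixing `G = I` in the genie-MAC outer-bound optimization (so the constraint
becomes `T_{j,i} = H_{i,j}` for `i ≤ j` and the objective `(1/2)log det(I + P Σ⁻¹)`)
does not change the optimal value. -/
theorem genie_opt_G_eq_id (K : ℕ) (hK : 1 ≤ K) (H : Matrix (Fin K) (Fin K) ℝ)
    (P N : ℝ) (hP : 0 < P) (hN : 0 < N) :
    sInf {x : ℝ | ∃ Sg T : Matrix (Fin K) (Fin K) ℝ,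
        Sg.PosDef ∧
        (∀ i j : Fin K, i ≤ j → T j i = H i j) ∧
        (∀ i : Fin K, (Tᵀ * Sg * T) i i ≤ N) ∧
        x = (1 / 2) * Real.log ((1 + P • Sg⁻¹).det)} =
      sInf {x : ℝ | ∃ G Sg T : Matrix (Fin K) (Fin K) ℝ,
        Sg.PosDef ∧
        (∀ i j : Fin K, i ≤ j → (Tᵀ * G) i j = H i j) ∧
        (∀ i : Fin K, (Tᵀ * Sg * T) i i ≤ N) ∧
        x = (1 / 2) * Real.log ((1 + P • (Sg⁻¹ * G * Gᵀ)).det)} :=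
  genie_opt_G_eq_id_general K H P N hP
end

section
/- Let Ĝ be a K×K real matrix and ε > 0 a real number. Then: (i) ε·I + Ĝᵀ·Ĝ is symmetric positive definite; (ii) the matrix I − Ĝ·(ε·I + Ĝᵀ·Ĝ)⁻¹·Ĝᵀ is positive semidefinite; and (iii) consequently, for any K×K real matrix T̂ whose columns t̂_i satisfy t̂_iᵀ t̂_i ≤ N for a real N > 0, setting T = Ĝᵀ·T̂ and Σ = (ε·I + Ĝᵀ·Ĝ)⁻¹, every diagonal entry of Tᵀ·Σ·T is at most N. -/
/-!
By the Woodbury identity, `1 - Ĝ (ε • 1 + Ĝᵀ Ĝ)⁻¹ Ĝᵀ = (1 + ε⁻¹ • Ĝ Ĝᵀ)⁻¹`, the inverse of a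
positive definite matrix, hence positive semidefinite. Conjugating it by `T̂` and reading off the
diagonal gives `(Tᵀ Σ T)ᵢᵢ ≤ (T̂ᵀ T̂)ᵢᵢ = ‖t̂ᵢ‖² ≤ N`.
-/

open Matrix

namespace Matrix

variable {m n : Type*} [Fintype m] [Fintype n]

theorem posDef_smul_one_add_transpose_mul_self [DecidableEq n] (G : Matrix m n ℝ) {ε : ℝ}
    (hε : 0 < ε) :
    (ε • (1 : Matrix n n ℝ) + Gᵀ * G).PosDef := by
  refine (PosDef.one.smul hε).add_posSemidef ?_
  simpa using posSemidef_conjTranspose_mul_self G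

theorem one_sub_mul_inv_mul_transpose_eq_inv [DecidableEq m] [DecidableEq n] (G : Matrix m n ℝ)
    {ε : ℝ} (hε : 0 < ε) :
    1 - G * (ε • (1 : Matrix n n ℝ) + Gᵀ * G)⁻¹ * Gᵀ = (1 + ε⁻¹ • (G * Gᵀ))⁻¹ := by
  have hCinv : (ε⁻¹ • (1 : Matrix n n ℝ))⁻¹ = ε • 1 :=
    inv_eq_left_inv (by simp [smul_smul, hε.ne'])
  have hWoodbury := add_mul_mul_inv_eq_sub (A := 1) (U := G) (C := ε⁻¹ • 1) (V := Gᵀ)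
    isUnit_one (PosDef.one.smul (inv_pos.2 hε)).isUnit
    (by simpa [hCinv] using (posDef_smul_one_add_transpose_mul_self G hε).isUnit)
  simpa [hCinv, Matrix.mul_smul, Matrix.mul_assoc] using hWoodbury.symm

theorem posSemidef_one_sub_mul_inv_mul_transpose [DecidableEq m] [DecidableEq n]
    (G : Matrix m n ℝ) {ε : ℝ} (hε : 0 < ε) :
    (1 - G * (ε • (1 : Matrix n n ℝ) + Gᵀ * G)⁻¹ * Gᵀ).PosSemidef := by
  rw [one_sub_mul_inv_mul_transpose_eq_inv G hε]
  refine PosSemidef.inv (PosSemidef.one.add (PosSemidef.smul ?_ (inv_nonneg.2 hε.le)))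
  simpa using posSemidef_self_mul_conjTranspose G

theorem transpose_mul_mul_diag_le_of_posSemidef_one_sub [DecidableEq m] {S : Matrix m m ℝ}
    (hS : (1 - S).PosSemidef) (T : Matrix m n ℝ) (i : n) :
    (Tᵀ * S * T) i i ≤ (Tᵀ * T) i i := by
  have h := (hS.conjTranspose_mul_mul_same T).diag_nonneg (i := i)
  rw [conjTranspose_eq_transpose_of_trivial, Matrix.mul_sub, Matrix.sub_mul, Matrix.mul_one,
    sub_apply] at h
  linarith

end Matrix

/-- Constraint verification in the `G = I` reduction of the genie-MAC optimization:
`εI + ĜᵀĜ` is symmetric positive definite, `I − Ĝ(εI + ĜᵀĜ)⁻¹Ĝᵀ` is positive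
semidefinite, and consequently for any `T̂` whose columns have squared norm at most
`N`, the substitution `T = ĜᵀT̂`, `Σ = (εI + ĜᵀĜ)⁻¹` satisfies `(TᵀΣT)_{i,i} ≤ N`. -/
theorem genie_G_eq_id_feasibility (K : ℕ) (Ghat : Matrix (Fin K) (Fin K) ℝ)
    (ε : ℝ) (hε : 0 < ε) :
    (ε • (1 : Matrix (Fin K) (Fin K) ℝ) + Ghatᵀ * Ghat).PosDef ∧
      ((1 : Matrix (Fin K) (Fin K) ℝ) -
        Ghat * (ε • (1 : Matrix (Fin K) (Fin K) ℝ) + Ghatᵀ * Ghat)⁻¹ * Ghatᵀ).PosSemidef ∧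
      (∀ (N : ℝ), 0 < N → ∀ That : Matrix (Fin K) (Fin K) ℝ,
        (∀ i : Fin K, (∑ j : Fin K, That j i * That j i) ≤ N) →
        ∀ i : Fin K,
          ((Ghatᵀ * That)ᵀ * (ε • (1 : Matrix (Fin K) (Fin K) ℝ) + Ghatᵀ * Ghat)⁻¹ *
            (Ghatᵀ * That)) i i ≤ N) := by
  have hS := posSemidef_one_sub_mul_inv_mul_transpose Ghat hε
  refine ⟨posDef_smul_one_add_transpose_mul_self Ghat hε, hS, fun N _ That hcol i => ?_⟩
  calc ((Ghatᵀ * That)ᵀ * (ε • (1 : Matrix (Fin K) (Fin K) ℝ) + Ghatᵀ * Ghat)⁻¹ *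
          (Ghatᵀ * That)) i i
      = (Thatᵀ * (Ghat * (ε • 1 + Ghatᵀ * Ghat)⁻¹ * Ghatᵀ) * That) i i := by
        simp only [transpose_mul, transpose_transpose, Matrix.mul_assoc]
    _ ≤ (Thatᵀ * That) i i := transpose_mul_mul_diag_le_of_posSemidef_one_sub hS That i
    _ = ∑ j, That j i * That j i := by simp only [mul_apply, transpose_apply]
    _ ≤ N := hcol i
end

section
/- Let K ≥ 2, let c_1, …, c_K and b_1, …, b_K be real numbers, and set S_i = Σ_{j=i}^K b_j² for 1 ≤ i ≤ K. For 1 ≤ j < i ≤ K define v_{i,j} = −c_i·c_j·S_i / ((Σ_{m=1}^{i−1} c_m²)·S_i + 1), and set v_{i,i} = 1. Then there exist real numbers d_{m,n} for 1 ≤ m, n ≤ K with d_{m,n} = 1 whenever m ≤ n, such that for every i with 2 ≤ i ≤ K and every n with 1 ≤ n ≤ i−1: Σ_{m=1}^{i} v_{i,m}·c_m·d_{m,n} = 0. -/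
/-!
For a fixed column `n`, the conditions in row `i > n` involve `d_{i,n}` only through the
diagonal term and the `d_{m,n}` with `m < i` only through the weighted sum
`A = ∑_{m<i} c_m² d_{m,n}`: since `v_{i,m} c_m = -c_i S_i c_m² / D_i` with
`D_i = (∑_{m<i} c_m²) S_i + 1`, the `i`-th condition reads `c_i (d_{i,n} - A S_i / D_i) = 0`.
Hence `d_{i,n} := A S_i / D_i` solves the triangular system, one row at a time.
-/

open Finset

theorem exists_forall_eq_apply_sum_Ico {R : Type*} [Semiring R] (w : ℕ → R) (u : ℕ → R → R) :
    ∃ x : ℕ → R, ∀ m, x m = u m (∑ j ∈ Ico 1 m, w j * x j) := by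
  -- `P m` is the running sum `∑_{j ≤ m} w j * x j`, built before `x` itself.
  let P : ℕ → R := fun m => Nat.rec 0 (fun k p => p + w (k + 1) * u (k + 1) p) m
  have hP : ∀ m, P m = ∑ j ∈ Ico 1 (m + 1), w j * u j (P (j - 1)) := by
    intro m
    induction m with
    | zero => simp [P]
    | succ k ih => rw [sum_Ico_succ_top (by omega), ← ih]; rfl
  refine ⟨fun m => u m (P (m - 1)), fun m => ?_⟩
  rcases m with _ | m
  · rw [Ico_eq_empty_of_le zero_le_one, sum_empty]
    rfl
  · exact congrArg (u (m + 1)) (hP m)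

theorem sum_Icc_mul_eq_zero_of_eq_div {c d : ℕ → ℝ} {v : ℕ → ℝ} {i : ℕ} (hi : 1 ≤ i)
    {s D : ℝ} (hv : ∀ j ∈ Ico 1 i, v j = -(c i * c j * s) / D) (hvi : v i = 1)
    (hd : d i = (∑ j ∈ Ico 1 i, c j ^ 2 * d j) * s / D) :
    ∑ m ∈ Icc 1 i, v m * c m * d m = 0 := by
  have hterm : ∀ j ∈ Ico 1 i, v j * c j * d j = -(c i * s) / D * (c j ^ 2 * d j) := by
    intro j hj
    rw [hv j hj]
    ring
  rw [← Ico_insert_right hi, sum_insert right_notMem_Ico, sum_congr rfl hterm, ← mul_sum, hvi,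
    hd]
  ring

theorem genie_d_parameters_exist_general (K : ℕ) (c : ℕ → ℝ)
    (S : ℕ → ℝ)
    (v : ℕ → ℕ → ℝ)
    (hvlt : ∀ i j : ℕ, 1 ≤ j → j < i → i ≤ K →
      v i j = -(c i * c j * S i) / ((∑ m ∈ Finset.Icc 1 (i - 1), c m ^ 2) * S i + 1))
    (hvdiag : ∀ i : ℕ, v i i = 1) :
    ∃ d : ℕ → ℕ → ℝ, (∀ m n : ℕ, m ≤ n → d m n = 1) ∧
      ∀ i : ℕ, 2 ≤ i → i ≤ K → ∀ n : ℕ, 1 ≤ n → n ≤ i - 1 →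
        (∑ m ∈ Finset.Icc 1 i, v i m * c m * d m n) = 0 := by
  choose d hd using fun n => exists_forall_eq_apply_sum_Ico (fun j => c j ^ 2) fun m A =>
    if m ≤ n then 1 else A * S m / ((∑ j ∈ Icc 1 (m - 1), c j ^ 2) * S m + 1)
  refine ⟨fun m n => d n m, fun m n hmn => (hd n m).trans (if_pos hmn), ?_⟩
  intro i hi hiK n _ hni
  dsimp only
  refine sum_Icc_mul_eq_zero_of_eq_div (by omega)
    (fun j hj => hvlt i j (mem_Ico.1 hj).1 (mem_Ico.1 hj).2 hiK) (hvdiag i) ?_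
  rw [hd, if_neg (by omega)]

/-- Existence of the free parameters `d_{m,n}` (with `d_{m,n} = 1` for `m ≤ n`)
satisfying the orthogonality conditions `∑_{m=1}^{i} v_{i,m} c_m d_{m,n} = 0` for
all `2 ≤ i ≤ K` and `1 ≤ n ≤ i−1`, where `v_{i,j}` are the subdiagonal entries of
the lower-triangular unit-diagonal matrix `V` used to evaluate the genie-MAC outer
bound for the degraded channel. -/
theorem genie_d_parameters_exist (K : ℕ) (hK : 2 ≤ K) (c b : ℕ → ℝ)
    (S : ℕ → ℝ) (hS : ∀ i, S i = ∑ j ∈ Finset.Icc i K, b j ^ 2)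
    (v : ℕ → ℕ → ℝ)
    (hvlt : ∀ i j : ℕ, 1 ≤ j → j < i → i ≤ K →
      v i j = -(c i * c j * S i) / ((∑ m ∈ Finset.Icc 1 (i - 1), c m ^ 2) * S i + 1))
    (hvdiag : ∀ i : ℕ, v i i = 1) :
    ∃ d : ℕ → ℕ → ℝ, (∀ m n : ℕ, m ≤ n → d m n = 1) ∧
      ∀ i : ℕ, 2 ≤ i → i ≤ K → ∀ n : ℕ, 1 ≤ n → n ≤ i - 1 →
        (∑ m ∈ Finset.Icc 1 i, v i m * c m * d m n) = 0 :=
  genie_d_parameters_exist_general K c S v hvlt hvdiag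
end

section
/- Let K ≥ 1, let c_1, …, c_K and b_1, …, b_K be real numbers, and set S_i = Σ_{j=i}^K b_j². Let d_{i,j} (1 ≤ i, j ≤ K) be real numbers with d_{i,j} = 1 for i ≤ j, and let G be the K×K matrix with entries g_{i,j} = c_i·b_j·d_{i,j}; set F = I + G·Gᵀ. Let V be the K×K lower-triangular matrix with unit diagonal, zero above the diagonal, and entries v_{i,j} = −c_i·c_j·S_i / ((Σ_{m=1}^{i−1} c_m²)·S_i + 1) for j < i. Assume the orthogonality conditions hold: Σ_{m=1}^{i} v_{i,m}·c_m·d_{m,n} = 0 for all 2 ≤ i ≤ K and 1 ≤ n ≤ i−1 (with v_{i,i} = 1). Then V·F is upper triangular, and its i-th diagonal entry equals (V·F)_{i,i} = 1 + c_i²·S_i / ((Σ_{m=1}^{i−1} c_m²)·S_i + 1) for every 1 ≤ i ≤ K. -/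
open Finset Matrix

/-!
Write `g_{k,l} = c_k b_l d_{k,l}`, so that `V F = V + (V G) Gᵀ`. In row `i` of `V G`, the
entries left of the diagonal vanish by the orthogonality conditions; on and right of it, the
triangularity of `V` and `d = 1` on and above the diagonal reduce entry `l` to `b_l (V c)_i`, and
the choice of `V` makes `(V c)_i = c_i / q_i` with `q_i = (∑_{m<i} c_m²) S_i + 1 > 0`. Hence
`(V G Gᵀ)_{i,j} = c_i c_j S_i / q_i` for `j ≤ i`, which cancels `v_{i,j}` below the diagonal and
adds `c_i² S_i / q_i` to `v_{i,i} = 1`.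
-/

theorem Fin.sum_filter_lt_succ_eq_sum_Icc {M : Type*} [AddCommMonoid M] {K : ℕ} (f : ℕ → M)
    (i : Fin K) : ∑ k : Fin K with k < i, f (k + 1) = ∑ m ∈ Icc 1 i.val, f m := by
  rw [filter_gt_eq_Iio, ← Ico_add_one_right_eq_Icc, ← Nat.zero_add 1, ← sum_Ico_add' f 0,
    Nat.Ico_zero_eq_range, ← Nat.Iio_eq_range, ← Fin.map_valEmbedding_Iio, sum_map]
  rfl

theorem Fin.sum_filter_le_succ_eq_sum_Icc {M : Type*} [AddCommMonoid M] {K : ℕ} (f : ℕ → M)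
    (i : Fin K) : ∑ k : Fin K with i ≤ k, f (k + 1) = ∑ m ∈ Icc (i.val + 1) K, f m := by
  rw [filter_le_eq_Ici, ← Ico_add_one_right_eq_Icc, ← sum_Ico_add',
    ← Fin.map_valEmbedding_Ici, sum_map]
  rfl

section

variable {ι : Type*} [Fintype ι] {V G : Matrix ι ι ℝ} {D : ι → ι → ℝ} {a β : ι → ℝ}
  {i j l : ι}

theorem mul_apply_eq_zero_of_orthogonal (hG : ∀ k l, G k l = a k * β l * D k l)
    (horth : ∑ k, V i k * a k * D k l = 0) : (V * G) i l = 0 := by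
  simp only [mul_apply, hG, ← mul_assoc, mul_right_comm _ (β l), ← sum_mul, horth, zero_mul]

variable [LinearOrder ι]

theorem mulVec_apply_of_row_eq_neg_div {t : ℝ} (hq : (∑ k with k < i, a k ^ 2) * t + 1 ≠ 0)
    (hdiag : V i i = 1) (hupper : ∀ k, i < k → V i k = 0)
    (hlower : ∀ k < i, V i k = -(a i * a k * t) / ((∑ m with m < i, a m ^ 2) * t + 1)) :
    (V *ᵥ a) i = a i / ((∑ k with k < i, a k ^ 2) * t + 1) := by
  set q := (∑ k with k < i, a k ^ 2) * t + 1
  have hterm : ∀ k, V i k * a k =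
      (if k = i then a i else 0) + (if k < i then a k ^ 2 else 0) * (-(a i * t) / q) := by
    intro k
    rcases lt_trichotomy k i with hk | rfl | hk
    · rw [hlower k hk, if_neg hk.ne, if_pos hk]
      ring
    · simp [hdiag]
    · simp [hupper k hk, hk.ne', hk.not_gt]
  calc (V *ᵥ a) i = a i + (∑ k with k < i, a k ^ 2) * (-(a i * t) / q) := by
        simp only [mulVec, dotProduct, hterm, sum_add_distrib, sum_ite_eq', mem_univ, if_true,
          ← sum_mul, sum_filter]
    _ = a i / q := by
        field_simp
        ring

theorem mul_apply_eq_mulVec_mul_of_le (hG : ∀ k l, G k l = a k * β l * D k l)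
    (hD : ∀ k l, k ≤ l → D k l = 1) (hupper : ∀ k, i < k → V i k = 0) (hil : i ≤ l) :
    (V * G) i l = (V *ᵥ a) i * β l := by
  rw [mul_apply, mulVec, dotProduct, sum_mul]
  refine sum_congr rfl fun k _ => ?_
  rcases le_or_gt k i with hki | hik
  · rw [hG, hD k l (hki.trans hil)]
    ring
  · rw [hupper k hik]
    ring

theorem mul_mul_transpose_apply_of_le (hG : ∀ k l, G k l = a k * β l * D k l)
    (hD : ∀ k l, k ≤ l → D k l = 1) (hupper : ∀ k, i < k → V i k = 0)
    (horth : ∀ l < i, ∑ k, V i k * a k * D k l = 0) (hji : j ≤ i) :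
    (V * G * Gᵀ) i j = (V *ᵥ a) i * a j * ∑ l with i ≤ l, β l ^ 2 := by
  rw [mul_apply, mul_sum, sum_filter]
  refine sum_congr rfl fun l _ => ?_
  rcases lt_or_ge l i with hli | hil
  · rw [mul_apply_eq_zero_of_orthogonal hG (horth l hli), if_neg hli.not_ge, zero_mul]
  · rw [mul_apply_eq_mulVec_mul_of_le hG hD hupper hil, transpose_apply, hG,
      hD j l (hji.trans hil), if_pos hil]
    ring

theorem mul_one_add_mul_transpose_apply_of_le (hG : ∀ k l, G k l = a k * β l * D k l)
    (hD : ∀ k l, k ≤ l → D k l = 1) (hupper : ∀ k, i < k → V i k = 0)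
    (horth : ∀ l < i, ∑ k, V i k * a k * D k l = 0) (hji : j ≤ i) :
    (V * (1 + G * Gᵀ)) i j = V i j + (V *ᵥ a) i * a j * ∑ l with i ≤ l, β l ^ 2 := by
  rw [mul_add, mul_one, ← Matrix.mul_assoc, Matrix.add_apply,
    mul_mul_transpose_apply_of_le hG hD hupper horth hji]

end

theorem genie_VF_upper_triangular_general (K : ℕ) (c b : ℕ → ℝ)
    (S : ℕ → ℝ) (hS : ∀ i, S i = ∑ j ∈ Finset.Icc i K, b j ^ 2)
    (d : ℕ → ℕ → ℝ) (hd : ∀ i j : ℕ, i ≤ j → d i j = 1)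
    (G : Matrix (Fin K) (Fin K) ℝ)
    (hG : ∀ i j : Fin K, G i j = c (i.val + 1) * b (j.val + 1) * d (i.val + 1) (j.val + 1))
    (F : Matrix (Fin K) (Fin K) ℝ) (hF : F = 1 + G * Gᵀ)
    (V : Matrix (Fin K) (Fin K) ℝ)
    (hVdiag : ∀ i : Fin K, V i i = 1)
    (hVupper : ∀ i j : Fin K, i < j → V i j = 0)
    (hVlower : ∀ i j : Fin K, j < i →
      V i j = -(c (i.val + 1) * c (j.val + 1) * S (i.val + 1)) /
        ((∑ m ∈ Finset.Icc 1 i.val, c m ^ 2) * S (i.val + 1) + 1))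
    (horth : ∀ i n : Fin K, n < i →
      (∑ m : Fin K, V i m * c (m.val + 1) * d (m.val + 1) (n.val + 1)) = 0) :
    (∀ i j : Fin K, j < i → (V * F) i j = 0) ∧
      (∀ i : Fin K, (V * F) i i =
        1 + c (i.val + 1) ^ 2 * S (i.val + 1) /
          ((∑ m ∈ Finset.Icc 1 i.val, c m ^ 2) * S (i.val + 1) + 1)) := by
  have hsum_c (i : Fin K) : ∑ m ∈ Icc 1 i.val, c m ^ 2 = ∑ k : Fin K with k < i, c (k + 1) ^ 2 :=
    (Fin.sum_filter_lt_succ_eq_sum_Icc (fun m => c m ^ 2) i).symm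
  have hsum_b (i : Fin K) : S (i.val + 1) = ∑ l : Fin K with i ≤ l, b (l + 1) ^ 2 := by
    rw [hS, Fin.sum_filter_le_succ_eq_sum_Icc (fun m => b m ^ 2)]
  simp only [hsum_c, hsum_b] at hVlower ⊢
  have hrow (i : Fin K) := mulVec_apply_of_row_eq_neg_div (a := fun k : Fin K => c (k + 1))
    (by positivity) (hVdiag i) (hVupper i) (hVlower i)
  have hVF (i j : Fin K) (hji : j ≤ i) := mul_one_add_mul_transpose_apply_of_le hG
    (fun k l hkl => hd _ _ (Nat.succ_le_succ hkl)) (hVupper i) (horth i) hji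
  subst hF
  refine ⟨fun i j hji => ?_, fun i => ?_⟩
  · rw [hVF i j hji.le, hrow, hVlower i j hji]
    ring
  · rw [hVF i i le_rfl, hrow, hVdiag]
    ring

/-- Under the orthogonality conditions on the free parameters `d`, the matrix
`V F` (with `F = I + G Gᵀ`, `G = (c_i b_j d_{i,j})`, and `V` the lower-triangular
unit-diagonal matrix with the indicated subdiagonal entries) is upper triangular,
with diagonal entries `(VF)_{i,i} = 1 + c_i² S_i / ((∑_{m=1}^{i−1} c_m²) S_i + 1)`. -/
theorem genie_VF_upper_triangular (K : ℕ) (hK : 1 ≤ K) (c b : ℕ → ℝ)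
    (S : ℕ → ℝ) (hS : ∀ i, S i = ∑ j ∈ Finset.Icc i K, b j ^ 2)
    (d : ℕ → ℕ → ℝ) (hd : ∀ i j : ℕ, i ≤ j → d i j = 1)
    (G : Matrix (Fin K) (Fin K) ℝ)
    (hG : ∀ i j : Fin K, G i j = c (i.val + 1) * b (j.val + 1) * d (i.val + 1) (j.val + 1))
    (F : Matrix (Fin K) (Fin K) ℝ) (hF : F = 1 + G * Gᵀ)
    (V : Matrix (Fin K) (Fin K) ℝ)
    (hVdiag : ∀ i : Fin K, V i i = 1)
    (hVupper : ∀ i j : Fin K, i < j → V i j = 0)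
    (hVlower : ∀ i j : Fin K, j < i →
      V i j = -(c (i.val + 1) * c (j.val + 1) * S (i.val + 1)) /
        ((∑ m ∈ Finset.Icc 1 i.val, c m ^ 2) * S (i.val + 1) + 1))
    (horth : ∀ i n : Fin K, n < i →
      (∑ m : Fin K, V i m * c (m.val + 1) * d (m.val + 1) (n.val + 1)) = 0) :
    (∀ i j : Fin K, j < i → (V * F) i j = 0) ∧
      (∀ i : Fin K, (V * F) i i =
        1 + c (i.val + 1) ^ 2 * S (i.val + 1) /
          ((∑ m ∈ Finset.Icc 1 i.val, c m ^ 2) * S (i.val + 1) + 1)) :=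
  genie_VF_upper_triangular_general K c b S hS d hd G hG F hF V hVdiag hVupper hVlower horth
end

section
/- Let K ≥ 1, let a_1, …, a_K be real numbers with a_1² ≤ a_2² ≤ … ≤ a_K², set a_0 = 0 and c_i = √(a_i² − a_{i-1}²), let b_1, …, b_K be real numbers, and set S_i = Σ_{j=i}^K b_j². Then there exist real numbers d_{i,j} (1 ≤ i, j ≤ K) with d_{i,j} = 1 for i ≤ j, such that the K×K matrix G with entries g_{i,j} = c_i·b_j·d_{i,j} satisfies det(I + G·Gᵀ) = Π_{i=1}^K (1 + (a_i² − a_{i-1}²)·S_i / (a_{i-1}²·S_i + 1)) = Π_{i=1}^K (a_i²·S_i + 1)/(a_{i-1}²·S_i + 1). -/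
/-!
Shift to 0-based indices: `γ m = c (m + 1)`, `β m = b (m + 1)`, so that `a m ^ 2` is the prefix
sum `A m = ∑ t < m, γ t ^ 2` (`prefixSq`) and `S (m + 1)` is the tail sum
`σ m = ∑ m ≤ j < K, β j ^ 2` (`tailSq`). Put `D m = A m * σ m + 1` (`denom`) and
`λ m = σ m / D m` (`gain`), and choose the free parameters column by column so that
`d m j = λ m * ∑ t < m, γ t ^ 2 * d t j` for `m > j` (`coeff`). Then the unit lower-triangular
matrix `N = 1 - L`, with `L p t = γ p * λ p * γ t` for `t < p`, kills the part of `G` below the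
diagonal, and `N (1 + G Gᵀ) Nᵀ = N Nᵀ + (N G) (N G)ᵀ` is diagonal with entries
`1 + γ m ^ 2 * λ m`. Both computations come down to the identity `λ m * A m + 1 / D m = 1`.
-/

open Finset Matrix

theorem Matrix.det_eq_prod_of_mul_mul_transpose_eq_diagonal {n R : Type*} [Fintype n]
    [DecidableEq n] [CommRing R] {N F : Matrix n n R} {δ : n → R} (hN : N.det = 1)
    (h : N * F * Nᵀ = diagonal δ) : F.det = ∏ i, δ i := by
  simpa [det_mul, hN] using congrArg det h

theorem Fin.sum_ite_val_lt {M : Type*} [AddCommMonoid M] {n : ℕ} (f : ℕ → M) {p : ℕ}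
    (hp : p ≤ n) : ∑ t : Fin n, (if (t : ℕ) < p then f t else 0) = ∑ t ∈ range p, f t := by
  rw [Fin.sum_univ_eq_sum_range (fun t => if t < p then f t else 0), ← sum_filter]
  congr 1
  ext t
  simp only [mem_filter, mem_range]
  omega

theorem Fin.sum_ite_le_val {M : Type*} [AddCommMonoid M] {n : ℕ} (f : ℕ → M) (p : ℕ) :
    ∑ t : Fin n, (if p ≤ (t : ℕ) then f t else 0) = ∑ t ∈ Ico p n, f t := by
  rw [Fin.sum_univ_eq_sum_range (fun t => if p ≤ t then f t else 0), ← sum_filter]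
  congr 1
  ext t
  simp only [mem_filter, mem_range, mem_Ico]
  omega

namespace GenieMAC

variable (K : ℕ) (γ β : ℕ → ℝ)

def prefixSq (m : ℕ) : ℝ := ∑ t ∈ range m, γ t ^ 2

def tailSq (m : ℕ) : ℝ := ∑ j ∈ Ico m K, β j ^ 2

noncomputable def denom (m : ℕ) : ℝ := prefixSq γ m * tailSq K β m + 1

noncomputable def gain (m : ℕ) : ℝ := tailSq K β m / denom K γ β m

-- Equal to `∑ t < n, γ t ^ 2 * coeff t j`; defining it first makes the recursion structural.
noncomputable def colSum (j : ℕ) : ℕ → ℝ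
  | 0 => 0
  | n + 1 => colSum j n + γ n ^ 2 * if n ≤ j then 1 else gain K γ β n * colSum j n

noncomputable def coeff (m j : ℕ) : ℝ := if m ≤ j then 1 else gain K γ β m * colSum K γ β j m

noncomputable def genieMatrix : Matrix (Fin K) (Fin K) ℝ :=
  of fun i j => γ i * β j * coeff K γ β i j

noncomputable def lowerPart : Matrix (Fin K) (Fin K) ℝ :=
  of fun p t => if (t : ℕ) < p then γ p * gain K γ β p * γ t else 0

noncomputable def reducedMatrix : Matrix (Fin K) (Fin K) ℝ :=
  of fun m j => if (m : ℕ) ≤ j then γ m * β j / denom K γ β m else 0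

theorem denom_pos (m : ℕ) : 0 < denom K γ β m := by
  unfold denom prefixSq tailSq
  positivity

theorem gain_mul_prefixSq_add_inv_denom (m : ℕ) :
    gain K γ β m * prefixSq γ m + (denom K γ β m)⁻¹ = 1 := by
  have := (denom_pos K γ β m).ne'
  unfold gain
  field_simp
  unfold denom
  ring

variable {K γ β}

theorem coeff_of_le {m j : ℕ} (h : m ≤ j) : coeff K γ β m j = 1 := if_pos h

theorem colSum_eq_sum (j n : ℕ) :
    colSum K γ β j n = ∑ t ∈ range n, γ t ^ 2 * coeff K γ β t j := by
  induction n with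
  | zero => rfl
  | succ n ih => rw [sum_range_succ, ← ih]; rfl

theorem colSum_of_le {j n : ℕ} (h : n ≤ j + 1) : colSum K γ β j n = prefixSq γ n := by
  rw [colSum_eq_sum, prefixSq]
  refine sum_congr rfl fun t ht => ?_
  rw [coeff_of_le (by simp at ht; omega), mul_one]

theorem lowerPart_isLowerTriangular : (lowerPart K γ β).IsLowerTriangular := by
  intro i j (hij : i < j)
  simp [lowerPart, not_lt.2 hij.le]

theorem lowerPart_mul_genieMatrix (m j : Fin K) :
    (lowerPart K γ β * genieMatrix K γ β) m j =
      γ m * gain K γ β m * β j * colSum K γ β j m := by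
  simp only [mul_apply, lowerPart, genieMatrix, of_apply, ite_mul, zero_mul]
  rw [Fin.sum_ite_val_lt (fun t => γ m * gain K γ β m * γ t * (γ t * β j * coeff K γ β t j))
    m.isLt.le, colSum_eq_sum, mul_sum]
  exact sum_congr rfl fun t _ => by ring

theorem one_sub_lowerPart_mul_genieMatrix :
    (1 - lowerPart K γ β) * genieMatrix K γ β = reducedMatrix K γ β := by
  ext m j
  rw [sub_mul, one_mul, Matrix.sub_apply, lowerPart_mul_genieMatrix]
  by_cases h : (m : ℕ) ≤ j
  · simp only [genieMatrix, reducedMatrix, of_apply, coeff_of_le h, if_pos h,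
      colSum_of_le (Nat.le_succ_of_le h)]
    linear_combination (-(γ m * β j)) * gain_mul_prefixSq_add_inv_denom K γ β m
  · simp only [genieMatrix, reducedMatrix, coeff, of_apply, if_neg h]
    ring

theorem lowerPart_mul_transpose (p q : Fin K) :
    (lowerPart K γ β * (lowerPart K γ β)ᵀ) p q =
      γ p * gain K γ β p * (γ q * gain K γ β q) * prefixSq γ (min p q) := by
  simp only [mul_apply, transpose_apply, lowerPart, of_apply, ite_mul, mul_ite, zero_mul,
    mul_zero, ← ite_and, ← lt_min_iff]
  rw [Fin.sum_ite_val_lt (fun t => γ p * gain K γ β p * γ t * (γ q * gain K γ β q * γ t))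
    (min_le_of_left_le q.isLt.le), min_comm, prefixSq, mul_sum]
  exact sum_congr rfl fun t _ => by ring

theorem reducedMatrix_mul_transpose (p q : Fin K) :
    (reducedMatrix K γ β * (reducedMatrix K γ β)ᵀ) p q =
      γ p * γ q * tailSq K β (max p q) / (denom K γ β p * denom K γ β q) := by
  simp only [mul_apply, transpose_apply, reducedMatrix, of_apply, ite_mul, mul_ite, zero_mul,
    mul_zero, ← ite_and, ← max_le_iff]
  rw [Fin.sum_ite_le_val (fun j => γ p * β j / denom K γ β p * (γ q * β j / denom K γ β q)),
    max_comm, tailSq, mul_sum, sum_div]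
  exact sum_congr rfl fun t _ => by ring

theorem one_sub_lowerPart_mul_transpose_add_reducedMatrix_mul_transpose :
    (1 - lowerPart K γ β) * (1 - lowerPart K γ β)ᵀ +
        reducedMatrix K γ β * (reducedMatrix K γ β)ᵀ =
      diagonal fun m : Fin K => 1 + γ m ^ 2 * gain K γ β m := by
  have hexpand : (1 - lowerPart K γ β) * (1 - lowerPart K γ β)ᵀ =
      1 - lowerPart K γ β - (lowerPart K γ β)ᵀ + lowerPart K γ β * (lowerPart K γ β)ᵀ := by
    rw [transpose_sub, transpose_one]
    noncomm_ring
  ext p q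
  rw [hexpand, Matrix.add_apply, Matrix.add_apply, Matrix.sub_apply, Matrix.sub_apply,
    lowerPart_mul_transpose, reducedMatrix_mul_transpose, transpose_apply]
  have hp := gain_mul_prefixSq_add_inv_denom K γ β p
  have hq := gain_mul_prefixSq_add_inv_denom K γ β q
  simp only [lowerPart, gain, of_apply] at hp hq ⊢
  rcases lt_trichotomy (p : ℕ) q with h | h | h
  · simp only [Fin.ext_iff, h.ne, not_false_eq_true, one_apply_ne, not_lt.2 h.le, ↓reduceIte,
      sub_self, h, zero_sub, min_eq_left h.le, max_eq_right h.le, diagonal_apply_ne, ne_eq]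
    linear_combination (γ p * γ q * (tailSq K β q / denom K γ β q)) * hp
  · obtain rfl := Fin.ext h
    simp only [one_apply_eq, lt_self_iff_false, ↓reduceIte, sub_zero, min_self, max_self,
      diagonal_apply_eq]
    linear_combination (γ p ^ 2 * (tailSq K β p / denom K γ β p)) * hp
  · simp only [Fin.ext_iff, h.ne', not_false_eq_true, one_apply_ne, h, ↓reduceIte, zero_sub,
      not_lt.2 h.le, sub_zero, min_eq_right h.le, max_eq_left h.le, diagonal_apply_ne, ne_eq]
    linear_combination (γ p * γ q * (tailSq K β p / denom K γ β p)) * hq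

theorem det_one_add_genieMatrix_mul_transpose :
    (1 + genieMatrix K γ β * (genieMatrix K γ β)ᵀ).det =
      ∏ m : Fin K, (1 + γ m ^ 2 * gain K γ β m) := by
  refine det_eq_prod_of_mul_mul_transpose_eq_diagonal (N := 1 - lowerPart K γ β) ?_ ?_
  · rw [det_of_isLowerTriangular _ (blockTriangular_one.sub lowerPart_isLowerTriangular)]
    simp [lowerPart]
  · rw [← one_sub_lowerPart_mul_transpose_add_reducedMatrix_mul_transpose,
      ← one_sub_lowerPart_mul_genieMatrix, transpose_mul]
    noncomm_ring

end GenieMAC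

theorem shift_sq_eq_sub_sq {K : ℕ} {a c : ℕ → ℝ} (ha0 : a 0 = 0)
    (hmono : ∀ i ∈ Ico 1 K, a i ^ 2 ≤ a (i + 1) ^ 2)
    (hc : ∀ i ∈ Icc 1 K, c i = √(a i ^ 2 - a (i - 1) ^ 2)) {m : ℕ} (hm : m < K) :
    c (m + 1) ^ 2 = a (m + 1) ^ 2 - a m ^ 2 := by
  have hstep : a m ^ 2 ≤ a (m + 1) ^ 2 := by
    rcases m with _ | m
    · simp [ha0, sq_nonneg]
    · exact hmono _ (mem_Ico.2 ⟨by omega, hm⟩)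
  rw [hc (m + 1) (mem_Icc.2 ⟨by omega, hm⟩), Nat.add_sub_cancel,
    Real.sq_sqrt (sub_nonneg.2 hstep)]

open GenieMAC

theorem genie_det_evaluation_general (K : ℕ)
    (a : ℕ → ℝ) (ha0 : a 0 = 0)
    (hmono : ∀ i ∈ Finset.Ico 1 K, a i ^ 2 ≤ a (i + 1) ^ 2)
    (c : ℕ → ℝ) (hc : ∀ i ∈ Finset.Icc 1 K, c i = Real.sqrt (a i ^ 2 - a (i - 1) ^ 2))
    (b : ℕ → ℝ)
    (S : ℕ → ℝ) (hS : ∀ i, S i = ∑ j ∈ Finset.Icc i K, b j ^ 2) :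
    ∃ d : ℕ → ℕ → ℝ, (∀ i j : ℕ, i ≤ j → d i j = 1) ∧
      ∀ G : Matrix (Fin K) (Fin K) ℝ,
        (∀ i j : Fin K, G i j = c (i.val + 1) * b (j.val + 1) * d (i.val + 1) (j.val + 1)) →
        ((1 + G * Gᵀ).det =
            ∏ i ∈ Finset.Icc 1 K,
              (1 + (a i ^ 2 - a (i - 1) ^ 2) * S i / (a (i - 1) ^ 2 * S i + 1)) ∧
          (1 + G * Gᵀ).det =
            ∏ i ∈ Finset.Icc 1 K, (a i ^ 2 * S i + 1) / (a (i - 1) ^ 2 * S i + 1)) := by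
  set γ : ℕ → ℝ := fun m => c (m + 1)
  set β : ℕ → ℝ := fun m => b (m + 1)
  have hγ : ∀ m < K, γ m ^ 2 = a (m + 1) ^ 2 - a m ^ 2 := fun _ hm =>
    shift_sq_eq_sub_sq ha0 hmono hc hm
  have hprefix : ∀ m ≤ K, prefixSq γ m = a m ^ 2 := fun m hm => by
    rw [prefixSq, sum_congr rfl fun t ht => hγ t (by simp at ht; omega),
      sum_range_sub (fun t => a t ^ 2), ha0]
    ring
  have htail : ∀ m, tailSq K β m = S (m + 1) := fun m => by
    rw [tailSq, sum_Ico_add' (fun j => b j ^ 2), hS, Ico_add_one_right_eq_Icc]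
  refine ⟨fun i j => coeff K γ β (i - 1) (j - 1), fun i j hij => coeff_of_le (by omega),
    fun G hG => ?_⟩
  have hGeq : G = genieMatrix K γ β := by
    ext i j
    simp [hG, genieMatrix, γ, β]
  have hdet : (1 + G * Gᵀ).det = ∏ i ∈ Icc 1 K,
      (1 + (a i ^ 2 - a (i - 1) ^ 2) * S i / (a (i - 1) ^ 2 * S i + 1)) := by
    rw [hGeq, det_one_add_genieMatrix_mul_transpose,
      Fin.prod_univ_eq_prod_range (fun m => 1 + γ m ^ 2 * gain K γ β m),
      ← Ico_add_one_right_eq_Icc, prod_Ico_eq_prod_range, Nat.add_sub_cancel]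
    refine prod_congr rfl fun m hm => ?_
    have hm : m < K := by simpa using hm
    rw [add_comm 1 m, gain, denom, htail, hprefix m hm.le, hγ m hm, Nat.add_sub_cancel,
      mul_div_assoc]
  refine ⟨hdet, hdet.trans (prod_congr rfl fun i _ => ?_)⟩
  have : 0 < a (i - 1) ^ 2 * S i + 1 := by
    rw [hS]
    positivity
  field_simp
  ring

/-- Evaluation of the genie-MAC outer bound for the degraded channel: there exist
free parameters `d_{i,j}` (with `d_{i,j} = 1` for `i ≤ j`) such that the matrix
`G = (c_i b_j d_{i,j})` satisfies
`det(I + G Gᵀ) = ∏_{i=1}^K (1 + (a_i² − a_{i−1}²) S_i / (a_{i−1}² S_i + 1))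
             = ∏_{i=1}^K (a_i² S_i + 1)/(a_{i−1}² S_i + 1)`. -/
theorem genie_det_evaluation (K : ℕ) (hK : 1 ≤ K)
    (a : ℕ → ℝ) (ha0 : a 0 = 0)
    (hmono : ∀ i ∈ Finset.Ico 1 K, a i ^ 2 ≤ a (i + 1) ^ 2)
    (c : ℕ → ℝ) (hc : ∀ i ∈ Finset.Icc 1 K, c i = Real.sqrt (a i ^ 2 - a (i - 1) ^ 2))
    (b : ℕ → ℝ)
    (S : ℕ → ℝ) (hS : ∀ i, S i = ∑ j ∈ Finset.Icc i K, b j ^ 2) :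
    ∃ d : ℕ → ℕ → ℝ, (∀ i j : ℕ, i ≤ j → d i j = 1) ∧
      ∀ G : Matrix (Fin K) (Fin K) ℝ,
        (∀ i j : Fin K, G i j = c (i.val + 1) * b (j.val + 1) * d (i.val + 1) (j.val + 1)) →
        ((1 + G * Gᵀ).det =
            ∏ i ∈ Finset.Icc 1 K,
              (1 + (a i ^ 2 - a (i - 1) ^ 2) * S i / (a (i - 1) ^ 2 * S i + 1)) ∧
          (1 + G * Gᵀ).det =
            ∏ i ∈ Finset.Icc 1 K, (a i ^ 2 * S i + 1) / (a (i - 1) ^ 2 * S i + 1)) :=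
  genie_det_evaluation_general K a ha0 hmono c hc b S hS
end

section
/- Let K ≥ 1, let a_1, …, a_K be real numbers with 0 < a_1 ≤ a_2 ≤ … ≤ a_K, set a_0 = 0, let b_1, …, b_K be real numbers, and set S_i = Σ_{j=i}^K b_j². Then there exist K×K real matrices G and T = [t_1 … t_K] such that: (i) (TᵀG)_{i,j} = a_i·b_j for all i ≤ j; (ii) t_iᵀ t_i ≤ 1 for all i; and (iii) (1/2)·log det(I + G·Gᵀ) = (1/2)·Σ_{i=1}^K log(1 + (a_i² − a_{i-1}²)·S_i / (a_{i-1}²·S_i + 1)). Consequently, the infimum of (1/2)·log det(I + G·Gᵀ) over all pairs (G, T) satisfying (i) and (ii) is at most (1/2)·Σ_{i=1}^K log(1 + (a_i² − a_{i-1}²)·S_i / (a_{i-1}²·S_i + 1)). -/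
/-!
The part of `G` below the diagonal is unconstrained, and it is chosen row by row so that each
row contributes exactly one SIC factor. Put `cₘ² = aₘ² − aₘ₋₁²`, `vₘ = aₘ₋₁² Sₘ + 1`, let `βₘ` be
the tail `(0, …, 0, b_m, …, b_K)` of `b`, and `Aₘ = I + ∑_{k<m} gₖ gₖᵀ`. The row
`gₘ = (cₘ / vₘ) Aₘ βₘ` still has entries `cₘ b_j` for `j ≥ m`, because every earlier row agrees
with a multiple of `b` there. So `T` with columns `t_i = (c₁, …, c_i, 0, …, 0) / a_i`, which are
unit vectors, gives `TᵀG = a bᵀ` on and above the diagonal. Since `gₘ` lies in the image of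
`Aₘ`, the matrix determinant lemma gives `det Aₘ₊₁ = det Aₘ · (1 + cₘ² Sₘ / vₘ)`, and
`det (I + G Gᵀ) = det (I + GᵀG) = det A_K` is the product of the SIC factors.
-/

open Finset Matrix

theorem Matrix.det_add_vecMulVec_mulVec {R ι : Type*} [CommRing R] [Fintype ι] [DecidableEq ι]
    (A : Matrix ι ι R) (z : ι → R) :
    (A + vecMulVec (A *ᵥ z) (A *ᵥ z)).det = A.det * (1 + (A *ᵥ z) ⬝ᵥ z) := by
  rw [← mul_vecMulVec, ← mul_one_add, det_mul, vecMulVec_eq Unit,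
    det_one_add_replicateCol_mul_replicateRow]

theorem Real.sInf_le_of_mem_of_nonneg {s : Set ℝ} {x : ℝ} (hx : x ∈ s) (h0 : 0 ≤ x) :
    sInf s ≤ x := by
  by_cases hs : BddBelow s
  · exact csInf_le hs hx
  · rwa [Real.sInf_of_not_bddBelow hs]

theorem Fin.sum_ite_le_eq_sum_range {M : Type*} [AddCommMonoid M] {n : ℕ} (i : Fin n)
    (f : ℕ → M) :
    ∑ k : Fin n, (if k ≤ i then f k else 0) = ∑ k ∈ range (i + 1), f k := by
  simp only [Fin.le_def]
  rw [Fin.sum_univ_eq_sum_range (fun k => if k ≤ (i : ℕ) then f k else 0), ← sum_filter]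
  congr 1
  ext k
  simp only [mem_filter, mem_range]
  omega

noncomputable section

namespace SuccessiveCancellation

-- Users are indexed from `0`: user `m` is the paper's user `m + 1`, `c m ^ 2` stands for
-- `a_{m+1}² − a_m²`, and `∑ k ∈ range m, c k ^ 2` for `a_m²`.
variable {n : ℕ} (c : ℕ → ℝ) (b : Fin n → ℝ)

def tailVec (m : ℕ) : Fin n → ℝ := fun j => if m ≤ (j : ℕ) then b j else 0

def tailEnergy (m : ℕ) : ℝ := tailVec b m ⬝ᵥ tailVec b m

def noiseInterference (m : ℕ) : ℝ := 1 + (∑ k ∈ range m, c k ^ 2) * tailEnergy b m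

def sinr (m : ℕ) : ℝ := c m ^ 2 * tailEnergy b m / noiseInterference c b m

def sicGram : ℕ → Matrix (Fin n) (Fin n) ℝ
  | 0 => 1
  | m + 1 =>
    let x := (c m / noiseInterference c b m) • (sicGram m *ᵥ tailVec b m)
    sicGram m + vecMulVec x x

def sicRow (m : ℕ) : Fin n → ℝ :=
  (c m / noiseInterference c b m) • (sicGram c b m *ᵥ tailVec b m)

def sicGain : Matrix (Fin n) (Fin n) ℝ := of fun m j => sicRow c b m j

def sicProjection (α : Fin n → ℝ) : Matrix (Fin n) (Fin n) ℝ :=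
  of fun k i => if k ≤ i then c k / α i else 0

variable {c b}

theorem sicGram_succ (m : ℕ) :
    sicGram c b (m + 1) = sicGram c b m + vecMulVec (sicRow c b m) (sicRow c b m) := rfl

theorem sicGram_eq (m : ℕ) :
    sicGram c b m = 1 + ∑ k ∈ range m, vecMulVec (sicRow c b k) (sicRow c b k) := by
  induction m with
  | zero => simp [sicGram]
  | succ m ih => rw [sicGram_succ, ih, sum_range_succ, add_assoc]

theorem tailEnergy_nonneg (m : ℕ) : 0 ≤ tailEnergy b m :=
  dotProduct_self_star_nonneg _

theorem noiseInterference_pos (m : ℕ) : 0 < noiseInterference c b m := by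
  have := tailEnergy_nonneg (b := b) m
  unfold noiseInterference
  positivity

theorem sinr_nonneg (m : ℕ) : 0 ≤ sinr c b m := by
  have := tailEnergy_nonneg (b := b) m
  have := noiseInterference_pos (c := c) (b := b) m
  unfold sinr
  positivity

theorem dotProduct_tailVec {x : Fin n → ℝ} {m : ℕ} {r : ℝ}
    (hx : ∀ j : Fin n, m ≤ (j : ℕ) → x j = r * b j) :
    x ⬝ᵥ tailVec b m = r * tailEnergy b m := by
  simp only [tailEnergy, dotProduct, mul_sum]
  refine sum_congr rfl fun j _ => ?_
  by_cases hj : m ≤ (j : ℕ)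
  · simp only [tailVec, if_pos hj, hx j hj]
    ring
  · simp only [tailVec, if_neg hj, mul_zero]

theorem sicRow_apply_of_le (m : ℕ) : ∀ j : Fin n, m ≤ (j : ℕ) → sicRow c b m j = c m * b j := by
  induction m using Nat.strong_induction_on with
  | _ m ih =>
  intro j hj
  have hrow : ∀ k ∈ range m, sicRow c b k ⬝ᵥ tailVec b m = c k * tailEnergy b m :=
    fun k hk => dotProduct_tailVec fun i hi => ih k (mem_range.1 hk) i (by grind)
  have hgram : (sicGram c b m *ᵥ tailVec b m) j = noiseInterference c b m * b j := by
    simp only [sicGram_eq, add_mulVec, one_mulVec, sum_mulVec, vecMulVec_mulVec, Pi.add_apply,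
      Finset.sum_apply]
    rw [sum_congr rfl fun k hk => by
      rw [Pi.smul_apply, op_smul_eq_smul, hrow k hk, smul_eq_mul,
        ih k (mem_range.1 hk) j (by grind)]]
    simp only [tailVec, if_pos hj, noiseInterference, add_mul, sum_mul]
    congr 1
    · ring
    · exact sum_congr rfl fun k _ => by ring
  rw [sicRow, Pi.smul_apply, hgram, smul_eq_mul]
  field_simp [(noiseInterference_pos (c := c) (b := b) m).ne']

theorem sicRow_dotProduct_tailVec (m : ℕ) :
    sicRow c b m ⬝ᵥ tailVec b m = c m * tailEnergy b m :=
  dotProduct_tailVec (sicRow_apply_of_le m)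

theorem det_sicGram_succ (m : ℕ) :
    (sicGram c b (m + 1)).det = (sicGram c b m).det * (1 + sinr c b m) := by
  have hrow : sicRow c b m =
      sicGram c b m *ᵥ ((c m / noiseInterference c b m) • tailVec b m) := by
    rw [mulVec_smul, sicRow]
  rw [sicGram_succ, hrow, det_add_vecMulVec_mulVec, ← hrow, dotProduct_smul, smul_eq_mul,
    sicRow_dotProduct_tailVec, sinr]
  ring

theorem det_sicGram (m : ℕ) : (sicGram c b m).det = ∏ k ∈ range m, (1 + sinr c b k) := by
  induction m with
  | zero => simp [sicGram]
  | succ m ih => rw [det_sicGram_succ, ih, prod_range_succ]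

theorem one_add_sicGain_transpose_mul : 1 + (sicGain c b)ᵀ * sicGain c b = sicGram c b n := by
  ext i j
  simp [sicGram_eq, sicGain, mul_apply, Matrix.sum_apply, vecMulVec_apply,
    Fin.sum_univ_eq_sum_range (fun m => sicRow c b m i * sicRow c b m j) n]

theorem det_one_add_sicGain_mul_transpose :
    (1 + sicGain c b * (sicGain c b)ᵀ).det = ∏ k ∈ range n, (1 + sinr c b k) := by
  rw [det_one_add_mul_comm, one_add_sicGain_transpose_mul, det_sicGram]

theorem log_det_one_add_sicGain_mul_transpose :
    Real.log (1 + sicGain c b * (sicGain c b)ᵀ).det =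
      ∑ k ∈ range n, Real.log (1 + sinr c b k) := by
  rw [det_one_add_sicGain_mul_transpose,
    Real.log_prod fun k _ => (add_pos_of_pos_of_nonneg one_pos (sinr_nonneg k)).ne']

theorem log_det_one_add_sicGain_mul_transpose_nonneg :
    0 ≤ Real.log (1 + sicGain c b * (sicGain c b)ᵀ).det := by
  rw [log_det_one_add_sicGain_mul_transpose]
  exact sum_nonneg fun k _ => Real.log_nonneg (le_add_of_nonneg_right (sinr_nonneg k))

variable {α : Fin n → ℝ}

theorem transpose_sicProjection_mul_sicGain_apply
    (hα : ∀ i : Fin n, α i ^ 2 = ∑ k ∈ range (i + 1), c k ^ 2) (hα0 : ∀ i, α i ≠ 0)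
    {i j : Fin n} (hij : i ≤ j) :
    ((sicProjection c α)ᵀ * sicGain c b) i j = α i * b j := by
  have hterm : ∀ k : Fin n, sicProjection c α k i * sicGain c b k j =
      if k ≤ i then c k ^ 2 * (b j / α i) else 0 := by
    intro k
    by_cases hk : k ≤ i
    · simp only [sicProjection, sicGain, of_apply, if_pos hk,
        sicRow_apply_of_le k j (Fin.le_def.1 (hk.trans hij))]
      ring
    · simp only [sicProjection, of_apply, if_neg hk, zero_mul]
  simp only [mul_apply, transpose_apply]
  rw [sum_congr rfl fun k _ => hterm k,
    Fin.sum_ite_le_eq_sum_range i fun k => c k ^ 2 * (b j / α i), ← sum_mul, ← hα]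
  field_simp [hα0 i]

theorem sum_sicProjection_mul_self
    (hα : ∀ i : Fin n, α i ^ 2 = ∑ k ∈ range (i + 1), c k ^ 2) (hα0 : ∀ i, α i ≠ 0)
    (i : Fin n) :
    ∑ k : Fin n, sicProjection c α k i * sicProjection c α k i = 1 := by
  have hterm : ∀ k : Fin n, sicProjection c α k i * sicProjection c α k i =
      if k ≤ i then c k ^ 2 / α i ^ 2 else 0 := by
    intro k
    by_cases hk : k ≤ i
    · simp only [sicProjection, of_apply, if_pos hk]
      ring
    · simp only [sicProjection, of_apply, if_neg hk, zero_mul]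
  rw [sum_congr rfl fun k _ => hterm k,
    Fin.sum_ite_le_eq_sum_range i fun k => c k ^ 2 / α i ^ 2, ← sum_div, ← hα]
  exact div_self (pow_ne_zero 2 (hα0 i))

theorem tailEnergy_comp_succ (b : ℕ → ℝ) (K m : ℕ) :
    tailEnergy (fun j : Fin K => b (j + 1)) m = ∑ i ∈ Icc (m + 1) K, b i ^ 2 := by
  have hterm : ∀ j : Fin K,
      tailVec (fun j : Fin K => b (j + 1)) m j * tailVec (fun j : Fin K => b (j + 1)) m j =
        if m ≤ (j : ℕ) then b (j + 1) ^ 2 else 0 := by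
    intro j
    by_cases hj : m ≤ (j : ℕ) <;> simp [tailVec, hj, sq]
  rw [tailEnergy, dotProduct, sum_congr rfl fun j _ => hterm j,
    Fin.sum_univ_eq_sum_range (fun j => if m ≤ j then b (j + 1) ^ 2 else 0), ← sum_filter,
    ← Ico_add_one_right_eq_Icc, ← sum_Ico_add']
  congr 1
  ext j
  simp only [mem_filter, mem_range, mem_Ico]
  omega

end SuccessiveCancellation

end

section DegradedChannel

open SuccessiveCancellation

variable {K : ℕ} {a : ℕ → ℝ}

theorem pos_of_pos_of_le_succ (hpos : 0 < a 1) (hmono : ∀ i ∈ Ico 1 K, a i ≤ a (i + 1))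
    {i : ℕ} (h1 : 1 ≤ i) (hK : i ≤ K) : 0 < a i := by
  induction i, h1 using Nat.le_induction with
  | base => exact hpos
  | succ i hi ih => exact (ih (by omega)).trans_le (hmono i (mem_Ico.2 ⟨hi, by omega⟩))

theorem sq_le_sq_succ (ha0 : a 0 = 0) (hpos : 0 < a 1) (hmono : ∀ i ∈ Ico 1 K, a i ≤ a (i + 1))
    {m : ℕ} (hm : m < K) : a m ^ 2 ≤ a (m + 1) ^ 2 := by
  rcases Nat.eq_zero_or_pos m with rfl | hm0
  · rw [ha0, zero_pow two_ne_zero]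
    positivity
  · exact pow_le_pow_left₀ (pos_of_pos_of_le_succ hpos hmono hm0 hm.le).le
      (hmono m (mem_Ico.2 ⟨hm0, hm⟩)) 2

theorem sum_range_sqrt_sq_sub_sq (ha0 : a 0 = 0) {m : ℕ} (h : ∀ k < m, a k ^ 2 ≤ a (k + 1) ^ 2) :
    ∑ k ∈ range m, √(a (k + 1) ^ 2 - a k ^ 2) ^ 2 = a m ^ 2 := by
  rw [sum_congr rfl fun k hk => Real.sq_sqrt (sub_nonneg.2 (h k (mem_range.1 hk))),
    sum_range_sub (fun k => a k ^ 2), ha0]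
  ring

theorem SuccessiveCancellation.sinr_sqrt_sq_sub_sq (ha0 : a 0 = 0)
    (hsq : ∀ m < K, a m ^ 2 ≤ a (m + 1) ^ 2) {b S : ℕ → ℝ}
    (hS : ∀ i, S i = ∑ j ∈ Icc i K, b j ^ 2) {m : ℕ} (hm : m < K) :
    sinr (fun m => √(a (m + 1) ^ 2 - a m ^ 2)) (fun j : Fin K => b (j + 1)) m =
      (a (m + 1) ^ 2 - a m ^ 2) * S (m + 1) / (a m ^ 2 * S (m + 1) + 1) := by
  rw [sinr, noiseInterference, tailEnergy_comp_succ, ← hS, Real.sq_sqrt (sub_nonneg.2 (hsq m hm)),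
    sum_range_sqrt_sq_sub_sq ha0 fun k hk => hsq k (by omega)]
  ring

end DegradedChannel

open SuccessiveCancellation in
theorem degraded_outer_bound_matches_sic_general (K : ℕ)
    (a : ℕ → ℝ) (ha0 : a 0 = 0) (hpos : 0 < a 1)
    (hmono : ∀ i ∈ Finset.Ico 1 K, a i ≤ a (i + 1))
    (b : ℕ → ℝ)
    (S : ℕ → ℝ) (hS : ∀ i, S i = ∑ j ∈ Finset.Icc i K, b j ^ 2) :
    (∃ G T : Matrix (Fin K) (Fin K) ℝ,
        (∀ i j : Fin K, i ≤ j → (Tᵀ * G) i j = a (i.val + 1) * b (j.val + 1)) ∧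
        (∀ i : Fin K, (∑ j : Fin K, T j i * T j i) ≤ 1) ∧
        (1 / 2 : ℝ) * Real.log ((1 + G * Gᵀ).det) =
          (1 / 2 : ℝ) * ∑ i ∈ Finset.Icc 1 K,
            Real.log (1 + (a i ^ 2 - a (i - 1) ^ 2) * S i / (a (i - 1) ^ 2 * S i + 1))) ∧
      sInf {x : ℝ | ∃ G T : Matrix (Fin K) (Fin K) ℝ,
          (∀ i j : Fin K, i ≤ j → (Tᵀ * G) i j = a (i.val + 1) * b (j.val + 1)) ∧
          (∀ i : Fin K, (∑ j : Fin K, T j i * T j i) ≤ 1) ∧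
          x = (1 / 2 : ℝ) * Real.log ((1 + G * Gᵀ).det)} ≤
        (1 / 2 : ℝ) * ∑ i ∈ Finset.Icc 1 K,
          Real.log (1 + (a i ^ 2 - a (i - 1) ^ 2) * S i / (a (i - 1) ^ 2 * S i + 1)) := by
  set c : ℕ → ℝ := fun m => √(a (m + 1) ^ 2 - a m ^ 2)
  set β : Fin K → ℝ := fun j => b (j + 1)
  have hsq : ∀ m < K, a m ^ 2 ≤ a (m + 1) ^ 2 := fun m => sq_le_sq_succ ha0 hpos hmono
  have hα : ∀ i : Fin K, a (i + 1) ^ 2 = ∑ k ∈ range (i + 1), c k ^ 2 := fun i =>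
    (sum_range_sqrt_sq_sub_sq ha0 fun k hk => hsq k (by omega)).symm
  have hα0 : ∀ i : Fin K, a (i + 1) ≠ 0 := fun i =>
    (pos_of_pos_of_le_succ hpos hmono (by omega) i.isLt).ne'
  have hval : (1 / 2 : ℝ) * Real.log (1 + sicGain c β * (sicGain c β)ᵀ).det =
      (1 / 2 : ℝ) * ∑ i ∈ Icc 1 K,
        Real.log (1 + (a i ^ 2 - a (i - 1) ^ 2) * S i / (a (i - 1) ^ 2 * S i + 1)) := by
    rw [log_det_one_add_sicGain_mul_transpose, ← Ico_add_one_right_eq_Icc, sum_Ico_eq_sum_range,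
      Nat.add_sub_cancel]
    congr 1
    refine sum_congr rfl fun m hm => ?_
    rw [sinr_sqrt_sq_sub_sq ha0 hsq hS (mem_range.1 hm), add_comm 1 m, Nat.add_sub_cancel]
  have hfeas := fun i j (hij : i ≤ j) =>
    transpose_sicProjection_mul_sicGain_apply (b := β) hα hα0 hij
  have hnorm := fun i => (sum_sicProjection_mul_self hα hα0 i).le
  have hnonneg := mul_nonneg (by norm_num : (0 : ℝ) ≤ 1 / 2)
    (log_det_one_add_sicGain_mul_transpose_nonneg (c := c) (b := β))
  exact ⟨⟨_, _, hfeas, hnorm, hval⟩,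
    hval ▸ Real.sInf_le_of_mem_of_nonneg ⟨_, _, hfeas, hnorm, rfl⟩ hnonneg⟩

/-- Matrix-analytic core of the sum-capacity theorem for K-user Gaussian degraded
interference channels (normalized `P = N = 1`): there exist matrices `(G, T)`
feasible for the genie-MAC optimization with `H = a bᵀ` — i.e. `(TᵀG)_{i,j} = a_i b_j`
for `i ≤ j` and columns of `T` of squared norm at most `1` — whose objective value
`(1/2) log det(I + G Gᵀ)` equals the SIC sum rate
`(1/2) ∑_{i=1}^K log (1 + (a_i² − a_{i−1}²) S_i / (a_{i−1}² S_i + 1))`; consequently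
the infimum of the genie-MAC objective is at most this value. -/
theorem degraded_outer_bound_matches_sic (K : ℕ) (hK : 1 ≤ K)
    (a : ℕ → ℝ) (ha0 : a 0 = 0) (hpos : 0 < a 1)
    (hmono : ∀ i ∈ Finset.Ico 1 K, a i ≤ a (i + 1))
    (b : ℕ → ℝ)
    (S : ℕ → ℝ) (hS : ∀ i, S i = ∑ j ∈ Finset.Icc i K, b j ^ 2) :
    (∃ G T : Matrix (Fin K) (Fin K) ℝ,
        (∀ i j : Fin K, i ≤ j → (Tᵀ * G) i j = a (i.val + 1) * b (j.val + 1)) ∧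
        (∀ i : Fin K, (∑ j : Fin K, T j i * T j i) ≤ 1) ∧
        (1 / 2 : ℝ) * Real.log ((1 + G * Gᵀ).det) =
          (1 / 2 : ℝ) * ∑ i ∈ Finset.Icc 1 K,
            Real.log (1 + (a i ^ 2 - a (i - 1) ^ 2) * S i / (a (i - 1) ^ 2 * S i + 1))) ∧
      sInf {x : ℝ | ∃ G T : Matrix (Fin K) (Fin K) ℝ,
          (∀ i j : Fin K, i ≤ j → (Tᵀ * G) i j = a (i.val + 1) * b (j.val + 1)) ∧
          (∀ i : Fin K, (∑ j : Fin K, T j i * T j i) ≤ 1) ∧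
          x = (1 / 2 : ℝ) * Real.log ((1 + G * Gᵀ).det)} ≤
        (1 / 2 : ℝ) * ∑ i ∈ Finset.Icc 1 K,
          Real.log (1 + (a i ^ 2 - a (i - 1) ^ 2) * S i / (a (i - 1) ^ 2 * S i + 1)) :=
  degraded_outer_bound_matches_sic_general K a ha0 hpos hmono b S hS
end
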